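/- arXiv:2211.01326 — 6 statements merged into one kernel-verified Lean document; each statement's English description precedes it below -/
import Mathlib

section
/- Let A be a unital complex prime *-algebra with a nontrivial projection p₁, p₂ = 1 - p₁, Aᵢⱼ = pᵢApⱼ, B a unital complex *-algebra, and α₁,...,α₆ ∈ ℂ with ∑αₖ ≠ 0. If Φ : A → B is a bijection preserving the sum of triple products α₁ab*c + α₂acb* + α₃b*ac + α₄cab* + α₅b*ca + α₆cb*a, then for i ≠ j and all b ∈ Aᵢⱼ, c ∈ Aⱼᵢ, Φ(b + c) = Φ(b) + Φ(c). -/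
def starTripleSum {R : Type*} [NonUnitalRing R] [Module ℂ R] [StarRing R]
    (α1 α2 α3 α4 α5 α6 : ℂ) (a b c : R) : R :=
  α1 • (a * star b * c) + α2 • (a * c * star b) + α3 • (star b * a * c) +
  α4 • (c * a * star b) + α5 • (star b * c * a) + α6 • (c * star b * a)

lemma m3 {A : Type*} [Ring A] {a b c : A} (h : a*b = c) (z : A) : a*(b*z) = c*z := by
  rw [← mul_assoc, h]

lemma sts_addr {R : Type*} [NonUnitalRing R] [Module ℂ R] [StarRing R]
    (α1 α2 α3 α4 α5 α6 : ℂ) (x y u v : R) :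
    starTripleSum α1 α2 α3 α4 α5 α6 x y (u + v) =
      starTripleSum α1 α2 α3 α4 α5 α6 x y u + starTripleSum α1 α2 α3 α4 α5 α6 x y v := by
  simp only [starTripleSum, mul_add, add_mul, smul_add]; abel

lemma sts_addl {R : Type*} [NonUnitalRing R] [Module ℂ R] [StarRing R]
    (α1 α2 α3 α4 α5 α6 : ℂ) (x y u v : R) :
    starTripleSum α1 α2 α3 α4 α5 α6 (u + v) x y =
      starTripleSum α1 α2 α3 α4 α5 α6 u x y + starTripleSum α1 α2 α3 α4 α5 α6 v x y := by
  simp only [starTripleSum, mul_add, add_mul, smul_add]; abel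

lemma sts_one_mid {R : Type*} [Ring R] [Algebra ℂ R] [StarRing R]
    (α1 α2 α3 α4 α5 α6 : ℂ) (x z : R) :
    starTripleSum α1 α2 α3 α4 α5 α6 x 1 z = (α1+α2+α3) • (x*z) + (α4+α5+α6) • (z*x) := by
  simp only [starTripleSum, star_one, mul_one, one_mul]; module

lemma smul_cancel {A : Type*} [AddCommGroup A] [Module ℂ A] {α : ℂ} (hα : α ≠ 0) {x y : A}
    (h : α • x = α • y) : x = y := by
  have := congrArg (fun w => α⁻¹ • w) h
  simpa [smul_smul, inv_mul_cancel₀ hα] using this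

/-- Key lemma (family Q3): with `t` in the third slot and middle slot `star`-ing to `q*y*r`,
we get `r*t*q = c` provided `α1+α5 ≠ 0` or `α4 ≠ 0`. -/
lemma keyQ3 {A B : Type*} [Ring A] [Algebra ℂ A] [StarRing A]
    [Ring B] [Algebra ℂ B] [StarRing B]
    (α1 α2 α3 α4 α5 α6 : ℂ)
    (hprime : ∀ x y : A, (∀ t : A, x * t * y = 0) → x = 0 ∨ y = 0)
    (q r b c t : A)
    (hq2 : q*q = q) (hr2 : r*r = r) (hqr0 : q*r = 0) (hrq0 : r*q = 0)
    (hsq : star q = q) (hsr : star r = r) (hq0 : q ≠ 0) (hr0 : r ≠ 0)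
    (hqb : q*b = b) (hbq : b*q = 0) (hbr : b*r = b) (hrb : r*b = 0)
    (hqc : q*c = 0) (hcq : c*q = c) (hcr : c*r = 0) (hrc : r*c = c)
    (Φ : A → B) (hinj : Function.Injective Φ) (hΦ0 : Φ 0 = 0)
    (hΦ : ∀ a b c : A, Φ (starTripleSum α1 α2 α3 α4 α5 α6 a b c) =
      starTripleSum α1 α2 α3 α4 α5 α6 (Φ a) (Φ b) (Φ c))
    (ht : Φ t = Φ b + Φ c)
    (hα : α1 + α5 ≠ 0 ∨ α4 ≠ 0) :
    r * t * q = c := by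
  have key : ∀ y : A, starTripleSum α1 α2 α3 α4 α5 α6 q (r * star y * q) t =
      starTripleSum α1 α2 α3 α4 α5 α6 q (r * star y * q) c := by
    intro y
    have hv : starTripleSum α1 α2 α3 α4 α5 α6 q (r * star y * q) b = 0 := by
      simp only [starTripleSum, star_mul, star_star, hsq, hsr, mul_assoc,
        m3 hq2, m3 hr2, m3 hqr0, m3 hrq0, m3 hqb, m3 hbq, m3 hbr, m3 hrb,
        m3 hqc, m3 hcq, m3 hcr, m3 hrc,
        hq2, hr2, hqr0, hrq0, hqb, hbq, hbr, hrb, hqc, hcq, hcr, hrc,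
        zero_mul, mul_zero, smul_zero, add_zero, zero_add]
    apply hinj
    rw [hΦ q (r * star y * q) t, hΦ q (r * star y * q) c, ht, sts_addr,
      ← hΦ q (r * star y * q) b, ← hΦ q (r * star y * q) c, hv, hΦ0, zero_add]
  rcases hα with h15 | h4
  · have step : ∀ y : A, q * y * (r*t*q - c) = 0 := by
      intro y
      have h := congrArg (fun w => q * w * q) (key y)
      simp only [starTripleSum, star_mul, star_star, hsq, hsr, mul_add, add_mul,
        mul_smul_comm, smul_mul_assoc, mul_assoc,
        m3 hq2, m3 hr2, m3 hqr0, m3 hrq0, m3 hqb, m3 hbq, m3 hbr, m3 hrb,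
        m3 hqc, m3 hcq, m3 hcr, m3 hrc,
        hq2, hr2, hqr0, hrq0, hqb, hbq, hbr, hrb, hqc, hcq, hcr, hrc,
        zero_mul, mul_zero, smul_zero, add_zero, zero_add] at h
      have h' : (α1+α5) • (q * (y * (r * (t * q)))) = (α1+α5) • (q * (y * c)) := by
        rw [add_smul, add_smul]; exact h
      have h'' := smul_cancel h15 h'
      rw [mul_sub, sub_eq_zero]
      calc q*y*(r*t*q) = q * (y * (r * (t * q))) := by simp only [mul_assoc]
      _ = q * (y * c) := h''
      _ = q*y*c := by rw [mul_assoc]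
    rcases hprime q (r*t*q - c) step with h | h
    · exact absurd h hq0
    · exact sub_eq_zero.mp h
  · have step : ∀ y : A, (r*t*q - c) * y * r = 0 := by
      intro y
      have h := congrArg (fun w => r * w * r) (key y)
      simp only [starTripleSum, star_mul, star_star, hsq, hsr, mul_add, add_mul,
        mul_smul_comm, smul_mul_assoc, mul_assoc,
        m3 hq2, m3 hr2, m3 hqr0, m3 hrq0, m3 hqb, m3 hbq, m3 hbr, m3 hrb,
        m3 hqc, m3 hcq, m3 hcr, m3 hrc,
        hq2, hr2, hqr0, hrq0, hqb, hbq, hbr, hrb, hqc, hcq, hcr, hrc,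
        zero_mul, mul_zero, smul_zero, add_zero, zero_add] at h
      have h'' := smul_cancel h4 h
      rw [sub_mul, sub_mul, sub_eq_zero]
      calc r*t*q*y*r = r * (t * (q * (y * r))) := by simp only [mul_assoc]
      _ = c * (y * r) := h''
      _ = c*y*r := by rw [← mul_assoc]
    rcases hprime (r*t*q - c) r step with h | h
    · exact sub_eq_zero.mp h
    · exact absurd h hr0

/-- Key lemma (family F1): with `t` in the first slot, middle slot `q`, third slot `r*y*q`,
we get `q*t*r = b` provided `α2+α3 ≠ 0` or `α6 ≠ 0`. -/
lemma keyF1 {A B : Type*} [Ring A] [Algebra ℂ A] [StarRing A]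
    [Ring B] [Algebra ℂ B] [StarRing B]
    (α1 α2 α3 α4 α5 α6 : ℂ)
    (hprime : ∀ x y : A, (∀ t : A, x * t * y = 0) → x = 0 ∨ y = 0)
    (q r b c t : A)
    (hq2 : q*q = q) (hr2 : r*r = r) (hqr0 : q*r = 0) (hrq0 : r*q = 0)
    (hsq : star q = q) (hsr : star r = r) (hq0 : q ≠ 0) (hr0 : r ≠ 0)
    (hqb : q*b = b) (hbq : b*q = 0) (hbr : b*r = b) (hrb : r*b = 0)
    (hqc : q*c = 0) (hcq : c*q = c) (hcr : c*r = 0) (hrc : r*c = c)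
    (Φ : A → B) (hinj : Function.Injective Φ) (hΦ0 : Φ 0 = 0)
    (hΦ : ∀ a b c : A, Φ (starTripleSum α1 α2 α3 α4 α5 α6 a b c) =
      starTripleSum α1 α2 α3 α4 α5 α6 (Φ a) (Φ b) (Φ c))
    (ht : Φ t = Φ b + Φ c)
    (hα : α2 + α3 ≠ 0 ∨ α6 ≠ 0) :
    q * t * r = b := by
  have key : ∀ y : A, starTripleSum α1 α2 α3 α4 α5 α6 t q (r*y*q) =
      starTripleSum α1 α2 α3 α4 α5 α6 b q (r*y*q) := by
    intro y
    have hv : starTripleSum α1 α2 α3 α4 α5 α6 c q (r*y*q) = 0 := by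
      simp only [starTripleSum, star_mul, star_star, hsq, hsr, mul_assoc,
        m3 hq2, m3 hr2, m3 hqr0, m3 hrq0, m3 hqb, m3 hbq, m3 hbr, m3 hrb,
        m3 hqc, m3 hcq, m3 hcr, m3 hrc,
        hq2, hr2, hqr0, hrq0, hqb, hbq, hbr, hrb, hqc, hcq, hcr, hrc,
        zero_mul, mul_zero, smul_zero, add_zero, zero_add]
    apply hinj
    rw [hΦ t q (r*y*q), hΦ b q (r*y*q), ht, sts_addl,
      ← hΦ b q (r*y*q), ← hΦ c q (r*y*q), hv, hΦ0, add_zero]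
  rcases hα with h23 | h6
  · have step : ∀ y : A, (q*t*r - b) * y * q = 0 := by
      intro y
      have h := congrArg (fun w => q * w * q) (key y)
      simp only [starTripleSum, star_mul, star_star, hsq, hsr, mul_add, add_mul,
        mul_smul_comm, smul_mul_assoc, mul_assoc,
        m3 hq2, m3 hr2, m3 hqr0, m3 hrq0, m3 hqb, m3 hbq, m3 hbr, m3 hrb,
        m3 hqc, m3 hcq, m3 hcr, m3 hrc,
        hq2, hr2, hqr0, hrq0, hqb, hbq, hbr, hrb, hqc, hcq, hcr, hrc,
        zero_mul, mul_zero, smul_zero, add_zero, zero_add] at h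
      have h' : (α2+α3) • (q * (t * (r * (y * q)))) = (α2+α3) • (b * (y * q)) := by
        rw [add_smul, add_smul]; exact h
      have h'' := smul_cancel h23 h'
      rw [sub_mul, sub_mul, sub_eq_zero]
      calc q*t*r*y*q = q * (t * (r * (y * q))) := by simp only [mul_assoc]
      _ = b * (y * q) := h''
      _ = b*y*q := by rw [← mul_assoc]
    rcases hprime (q*t*r - b) q step with h | h
    · exact sub_eq_zero.mp h
    · exact absurd h hq0
  · have step : ∀ y : A, r * y * (q*t*r - b) = 0 := by
      intro y
      have h := congrArg (fun w => r * w * r) (key y)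
      simp only [starTripleSum, star_mul, star_star, hsq, hsr, mul_add, add_mul,
        mul_smul_comm, smul_mul_assoc, mul_assoc,
        m3 hq2, m3 hr2, m3 hqr0, m3 hrq0, m3 hqb, m3 hbq, m3 hbr, m3 hrb,
        m3 hqc, m3 hcq, m3 hcr, m3 hrc,
        hq2, hr2, hqr0, hrq0, hqb, hbq, hbr, hrb, hqc, hcq, hcr, hrc,
        zero_mul, mul_zero, smul_zero, add_zero, zero_add] at h
      have h'' := smul_cancel h6 h
      rw [mul_sub, sub_eq_zero]
      calc r*y*(q*t*r) = r * (y * (q * (t * r))) := by simp only [mul_assoc]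
      _ = r * (y * b) := h''
      _ = r*y*b := by rw [mul_assoc]
    rcases hprime r (q*t*r - b) step with h | h
    · exact absurd h hr0
    · exact sub_eq_zero.mp h

lemma mainlem {A B : Type*} [Ring A] [Algebra ℂ A] [StarRing A]
    [Ring B] [Algebra ℂ B] [StarRing B]
    (α1 α2 α3 α4 α5 α6 : ℂ)
    (hsum : α1 + α2 + α3 + α4 + α5 + α6 ≠ 0)
    (hprime : ∀ x y : A, (∀ t : A, x * t * y = 0) → x = 0 ∨ y = 0)
    (q r : A) (hq2 : q * q = q) (hq1 : q + r = 1)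
    (hsq : star q = q) (hsr : star r = r) (hq0 : q ≠ 0) (hr0 : r ≠ 0)
    (Φ : A → B) (hbij : Function.Bijective Φ)
    (hΦ : ∀ a b c : A, Φ (starTripleSum α1 α2 α3 α4 α5 α6 a b c) =
      starTripleSum α1 α2 α3 α4 α5 α6 (Φ a) (Φ b) (Φ c))
    (b c : A) (hb : ∃ x : A, b = q * x * r) (hc : ∃ x : A, c = r * x * q) :
    Φ (b + c) = Φ b + Φ c := by
  obtain ⟨x0, hbdef⟩ := hb
  obtain ⟨y0, hcdef⟩ := hc
  have hinj := hbij.1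
  have hre : r = 1 - q := by rw [← hq1]; abel
  have hqr0 : q*r = 0 := by rw [hre, mul_sub, mul_one, hq2, sub_self]
  have hrq0 : r*q = 0 := by rw [hre, sub_mul, one_mul, hq2, sub_self]
  have hr2 : r*r = r := by rw [hre, sub_mul, one_mul, mul_sub, mul_one, hq2, sub_self, sub_zero]
  have hqb : q*b = b := by simp only [hbdef, mul_assoc, m3 hq2]
  have hbr : b*r = b := by simp only [hbdef, mul_assoc, hr2]
  have hbq : b*q = 0 := by simp only [hbdef, mul_assoc, hrq0, mul_zero]
  have hrb : r*b = 0 := by simp only [hbdef, mul_assoc, m3 hrq0, zero_mul]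
  have hrc : r*c = c := by simp only [hcdef, mul_assoc, m3 hr2]
  have hcq : c*q = c := by simp only [hcdef, mul_assoc, hq2]
  have hcr : c*r = 0 := by simp only [hcdef, mul_assoc, hqr0, mul_zero]
  have hqc : q*c = 0 := by simp only [hcdef, mul_assoc, m3 hqr0, zero_mul]
  -- Φ 0 = 0
  obtain ⟨u, hu⟩ := hbij.2 0
  have h1 : Φ (starTripleSum α1 α2 α3 α4 α5 α6 0 u 0) = Φ u := by
    rw [hΦ, hu]; simp [starTripleSum]
  have h2 : starTripleSum α1 α2 α3 α4 α5 α6 (0:A) u 0 = 0 := by simp [starTripleSum]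
  have hu0 : u = 0 := by
    apply hinj
    rw [h2] at h1
    exact h1.symm
  have hΦ0 : Φ 0 = 0 := by rw [← hu0]; exact hu
  -- choose t with Φ t = Φ b + Φ c
  obtain ⟨t, ht⟩ := hbij.2 (Φ b + Φ c)
  -- step: q*t + t*q = t
  have e1 : Φ (starTripleSum α1 α2 α3 α4 α5 α6 q 1 t) =
      Φ (starTripleSum α1 α2 α3 α4 α5 α6 q 1 b) + Φ (starTripleSum α1 α2 α3 α4 α5 α6 q 1 c) := by
    rw [hΦ q 1 t, ht, sts_addr, ← hΦ q 1 b, ← hΦ q 1 c]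
  have e2 : Φ (starTripleSum α1 α2 α3 α4 α5 α6 t 1 r) =
      Φ (starTripleSum α1 α2 α3 α4 α5 α6 b 1 r) + Φ (starTripleSum α1 α2 α3 α4 α5 α6 c 1 r) := by
    rw [hΦ t 1 r, ht, sts_addl, ← hΦ b 1 r, ← hΦ c 1 r]
  have c1 : starTripleSum α1 α2 α3 α4 α5 α6 q 1 b = (α1+α2+α3) • b := by
    rw [sts_one_mid, hqb, hbq, smul_zero, add_zero]
  have c2 : starTripleSum α1 α2 α3 α4 α5 α6 q 1 c = (α4+α5+α6) • c := by
    rw [sts_one_mid, hqc, hcq, smul_zero, zero_add]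
  have c3 : starTripleSum α1 α2 α3 α4 α5 α6 b 1 r = (α1+α2+α3) • b := by
    rw [sts_one_mid, hbr, hrb, smul_zero, add_zero]
  have c4 : starTripleSum α1 α2 α3 α4 α5 α6 c 1 r = (α4+α5+α6) • c := by
    rw [sts_one_mid, hcr, hrc, smul_zero, zero_add]
  have e3 : starTripleSum α1 α2 α3 α4 α5 α6 q 1 t = starTripleSum α1 α2 α3 α4 α5 α6 t 1 r := by
    apply hinj
    rw [e1, e2, c1, c2, c3, c4]
  have e4 : (α1+α2+α3) • (q*t) + (α4+α5+α6) • (t*q) =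
      (α1+α2+α3) • (t*r) + (α4+α5+α6) • (r*t) := by
    rw [← sts_one_mid, ← sts_one_mid]; exact e3
  have etr : t*r = t - t*q := by rw [hre, mul_sub, mul_one]
  have ert : r*t = t - q*t := by rw [hre, sub_mul, one_mul]
  rw [etr, ert] at e4
  have e5 : (α1 + α2 + α3 + α4 + α5 + α6) • (q*t + t*q) = (α1 + α2 + α3 + α4 + α5 + α6) • t := by
    linear_combination (norm := module) e4
  have e6 : q*t + t*q = t := smul_cancel hsum e5
  have hqtq : q*(t*q) = 0 := by
    have h := congrArg (fun w => q * w * q) e6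
    simp only [mul_add, add_mul, mul_assoc, m3 hq2, hq2] at h
    exact add_eq_right.mp h
  have hrtr : r*(t*r) = 0 := by
    have h := congrArg (fun w => r * w * r) e6
    simp only [mul_add, add_mul, mul_assoc, m3 hrq0, m3 hqr0, hrq0, hqr0,
      zero_mul, mul_zero, add_zero, zero_add] at h
    exact h.symm
  -- corner identification
  have hdisj : (α1 + α5 ≠ 0 ∨ α4 ≠ 0) ∨ (α2 + α3 ≠ 0 ∨ α6 ≠ 0) := by
    by_contra hcon
    push_neg at hcon
    obtain ⟨⟨d1, d2⟩, d3, d4⟩ := hcon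
    apply hsum
    linear_combination d1 + d2 + d3 + d4
  have ht' : Φ t = Φ c + Φ b := by rw [ht]; abel
  have hcorner : q*t*r = b ∧ r*t*q = c := by
    rcases hdisj with h | h
    · constructor
      · exact keyQ3 α1 α2 α3 α4 α5 α6 hprime r q c b t hr2 hq2 hrq0 hqr0 hsr hsq hr0 hq0
          hrc hcr hcq hqc hrb hbr hbq hqb Φ hinj hΦ0 hΦ ht' h
      · exact keyQ3 α1 α2 α3 α4 α5 α6 hprime q r b c t hq2 hr2 hqr0 hrq0 hsq hsr hq0 hr0
          hqb hbq hbr hrb hqc hcq hcr hrc Φ hinj hΦ0 hΦ ht h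
    · constructor
      · exact keyF1 α1 α2 α3 α4 α5 α6 hprime q r b c t hq2 hr2 hqr0 hrq0 hsq hsr hq0 hr0
          hqb hbq hbr hrb hqc hcq hcr hrc Φ hinj hΦ0 hΦ ht h
      · exact keyF1 α1 α2 α3 α4 α5 α6 hprime r q c b t hr2 hq2 hrq0 hqr0 hsr hsq hr0 hq0
          hrc hcr hcq hqc hrb hbr hbq hqb Φ hinj hΦ0 hΦ ht' h
  have htbc : t = b + c := by
    have expand : t = q*(t*q) + q*t*r + (r*t*q + r*(t*r)) := by
      calc t = (q+r)*(t*(q+r)) := by rw [hq1, mul_one, one_mul]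
      _ = q*(t*q) + q*t*r + (r*t*q + r*(t*r)) := by noncomm_ring
    rw [expand, hqtq, hrtr, hcorner.1, hcorner.2, zero_add, add_zero]
  rw [← htbc, ht]

theorem stmt4 {A B : Type*} [Ring A] [Algebra ℂ A] [StarRing A]
    [Ring B] [Algebra ℂ B] [StarRing B]
    (α1 α2 α3 α4 α5 α6 : ℂ)
    (hsum : α1 + α2 + α3 + α4 + α5 + α6 ≠ 0)
    (hprime : ∀ x y : A, (∀ t : A, x * t * y = 0) → x = 0 ∨ y = 0)
    (e : A) (hestar : star e = e) (heidem : e * e = e) (he0 : e ≠ 0) (he1 : e ≠ 1)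
    (Φ : A → B) (hbij : Function.Bijective Φ)
    (hΦ : ∀ a b c : A, Φ (starTripleSum α1 α2 α3 α4 α5 α6 a b c) =
      starTripleSum α1 α2 α3 α4 α5 α6 (Φ a) (Φ b) (Φ c))
    (q r : A) (hqr : (q = e ∧ r = 1 - e) ∨ (q = 1 - e ∧ r = e))
    (b c : A) (hb : ∃ x : A, b = q * x * r) (hc : ∃ x : A, c = r * x * q) :
    Φ (b + c) = Φ b + Φ c := by
  have he1' : (1 : A) - e ≠ 0 := fun h => he1 (sub_eq_zero.mp h).symm
  have hse' : star ((1:A) - e) = 1 - e := by rw [star_sub, star_one, hestar]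
  rcases hqr with ⟨hqe, hre⟩ | ⟨hqe, hre⟩
  · rw [hqe, hre] at hb hc
    exact mainlem α1 α2 α3 α4 α5 α6 hsum hprime e (1-e) heidem (by abel) hestar hse' he0 he1'
      Φ hbij hΦ b c hb hc
  · rw [hqe, hre] at hb hc
    have h2 : ((1:A)-e) * (1-e) = 1-e := by
      rw [sub_mul, one_mul, mul_sub, mul_one, heidem, sub_self, sub_zero]
    exact mainlem α1 α2 α3 α4 α5 α6 hsum hprime (1-e) e h2 (by abel) hse' hestar he1' he0
      Φ hbij hΦ b c hb hc
end

section
/- Let A be a unital complex prime *-algebra with a nontrivial projection p₁, p₂ = 1 - p₁, Aᵢⱼ = pᵢApⱼ, B a unital complex *-algebra, α₁,...,α₆ ∈ ℂ with ∑αₖ ≠ 0. If Φ : A → B is a bijection preserving the sum of triple products α₁ab*c + α₂acb* + α₃b*ac + α₄cab* + α₅b*ca + α₆cb*a, then for i ≠ j and all a, b ∈ Aᵢⱼ, Φ(a + b) = Φ(a) + Φ(b). -/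
/-!
Write `T` for the triple sum and `q, r` for the two projections. For `d ∈ {q, r}` and `u ∈ qAr`
pick `t` with `Φ t = Φ d + Φ u`. Injectivity shows that every triple product (one slot varying,
the other two fixed) that vanishes at `d` or at `u` also vanishes at `D = t - (d + u)`. The
products of `D` with `q` and `r` kill the off-diagonal corners `qDr, rDq` (using `∑ αₖ ≠ 0`);
the products with elements `w ∈ qAr` give six linear relations between `qDq·w` and `w·rDr`
that force both to vanish, and primeness then kills `qDq` and `rDr`. Hence `D = 0`, i.e.
`Φ (d + u) = Φ d + Φ u`.

For `a, b ∈ qAr` and `β = α₁ + α₂ + α₃ ≠ 0` one has `a + b = T (q + a) y (r + b)` with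
`star y = β⁻¹ • 1`, and expanding both sides with the previous step gives
`Φ (a + b) = Φ a + Φ b`; if `β = 0`, the same works with `q, r` swapped and `α₄ + α₅ + α₆`.
-/

open Function

theorem map_sub_add_eq_zero_of_map_eq_zero {A B : Type*} [AddGroup A] [AddZeroClass B]
    {Φ : A → B} (hinj : Injective Φ) (hΦ0 : Φ 0 = 0) {F : A → A} {G : B → B}
    (hF : ∀ a b, F (a + b) = F a + F b) (hG : ∀ a b, G (a + b) = G a + G b)
    (hFG : ∀ x, Φ (F x) = G (Φ x)) {t d u : A} (ht : Φ t = Φ d + Φ u)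
    (hdu : F d = 0 ∨ F u = 0) : F (t - (d + u)) = 0 := by
  let f := AddMonoidHom.mk' F hF
  have hft : F t = F d + F u := hinj <| by
    rw [hFG, ht, hG, ← hFG, ← hFG]
    rcases hdu with h | h <;> simp only [h, hΦ0, zero_add, add_zero]
  change f (t - (d + u)) = 0
  rw [map_sub, map_add]
  exact sub_eq_zero.mpr hft

section Peirce
variable {A : Type*} [Ring A] {q r : A}

theorem eq_zero_of_peirce_eq_zero (hqr : q + r = 1) {x : A} (h11 : q * x * q = 0)
    (h12 : q * x * r = 0) (h21 : r * x * q = 0) (h22 : r * x * r = 0) : x = 0 := by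
  calc x = (q + r) * x * (q + r) := by rw [hqr, one_mul, mul_one]
    _ = 0 := by simp only [add_mul, mul_add, h11, h12, h21, h22, add_zero]

variable [StarRing A]

theorem IsStarProjection.of_add_eq_one (hq : IsStarProjection q) (hqr : q + r = 1) :
    IsStarProjection r := by
  rw [eq_sub_of_add_eq' hqr]
  exact hq.one_sub

theorem IsStarProjection.peirce_simps (hq : IsStarProjection q) (hqr : q + r = 1) :
    star q = q ∧ star r = r ∧ q * q = q ∧ r * r = r ∧ q * r = 0 ∧ r * q = 0 ∧
      ∀ z, q * (q * z) = q * z ∧ r * (r * z) = r * z ∧ q * (r * z) = 0 ∧ r * (q * z) = 0 := by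
  have hr := hq.of_add_eq_one hqr
  have hqr0 : q * r = 0 := eq_sub_of_add_eq' hqr ▸ hq.mul_one_sub_self
  have hrq0 : r * q = 0 := eq_sub_of_add_eq' hqr ▸ hq.one_sub_mul_self
  refine ⟨hq.isSelfAdjoint.star_eq, hr.isSelfAdjoint.star_eq, hq.isIdempotentElem.eq,
    hr.isIdempotentElem.eq, hqr0, hrq0, fun z => ?_⟩
  simp only [← mul_assoc, hq.isIdempotentElem.eq, hr.isIdempotentElem.eq, hqr0, hrq0, zero_mul,
    and_self]

end Peirce

section TripleSum

variable {α1 α2 α3 α4 α5 α6 : ℂ}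

local notation "T" => starTripleSum α1 α2 α3 α4 α5 α6

/-- Summing the last four relations gives `P + Q = 0`; after substituting `Q = -P`, the
coefficients of the first, second, third and fifth relations cannot all vanish. -/
theorem eq_zero_of_starTripleSum_relations {M : Type*} [AddCommGroup M] [Module ℂ M]
    (hs : α1 + α2 + α3 + α4 + α5 + α6 ≠ 0) {P Q : M}
    (r1 : (α2 + α4) • P + α6 • Q = 0) (r2 : α1 • P + (α3 + α5) • Q = 0)
    (r3 : (α1 + α3) • P + α5 • Q = 0) (r4 : α2 • P + (α4 + α6) • Q = 0)
    (r5 : (α5 + α6) • P + α3 • Q = 0) (r6 : α4 • P + (α1 + α2) • Q = 0) :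
    P = 0 ∧ Q = 0 := by
  have hsPQ : (α1 + α2 + α3 + α4 + α5 + α6) • (P + Q) = 0 := by
    linear_combination (norm := module) r3 + r4 + r5 + r6
  obtain rfl : Q = -P := eq_neg_of_add_eq_zero_right ((smul_eq_zero.mp hsPQ).resolve_left hs)
  suffices hP : P = 0 by simp [hP]
  by_contra hP
  have coeff_eq_zero {c : ℂ} (h : c • P = 0) : c = 0 := (smul_eq_zero.mp h).resolve_right hP
  have c1 := coeff_eq_zero (c := α2 + α4 - α6) (by linear_combination (norm := module) r1)
  have c2 := coeff_eq_zero (c := α1 - α3 - α5) (by linear_combination (norm := module) r2)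
  have c3 := coeff_eq_zero (c := α1 + α3 - α5) (by linear_combination (norm := module) r3)
  have c4 := coeff_eq_zero (c := α5 + α6 - α3) (by linear_combination (norm := module) r5)
  exact hs (by linear_combination c1 - c2 + 2 * c3 + 2 * c4)

section NonUnital
variable {R : Type*} [NonUnitalRing R] [Module ℂ R] [StarRing R]

theorem starTripleSum_add_left (x x' y z : R) : T (x + x') y z = T x y z + T x' y z := by
  simp only [starTripleSum, add_mul, mul_add, smul_add]; abel

theorem starTripleSum_add_mid (x y y' z : R) : T x (y + y') z = T x y z + T x y' z := by
  simp only [starTripleSum, star_add, add_mul, mul_add, smul_add]; abel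

theorem starTripleSum_add_right (x y z z' : R) : T x y (z + z') = T x y z + T x y z' := by
  simp only [starTripleSum, add_mul, mul_add, smul_add]; abel

theorem starTripleSum_zero_right (x y : R) : T x y 0 = 0 := by
  simp [starTripleSum]

end NonUnital

variable (α1 α2 α3 α4 α5 α6) in
def PreservesStarTripleSum {A B : Type*} [NonUnitalRing A] [Module ℂ A] [StarRing A]
    [NonUnitalRing B] [Module ℂ B] [StarRing B] (Φ : A → B) : Prop :=
  ∀ a b c : A, Φ (T a b c) = T (Φ a) (Φ b) (Φ c)

theorem PreservesStarTripleSum.map_zero {A B : Type*} [NonUnitalRing A] [Module ℂ A]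
    [StarRing A] [NonUnitalRing B] [Module ℂ B] [StarRing B] {Φ : A → B}
    (hΦ : PreservesStarTripleSum α1 α2 α3 α4 α5 α6 Φ) (hsurj : Surjective Φ) : Φ 0 = 0 := by
  obtain ⟨c, hc⟩ := hsurj 0
  calc Φ 0 = Φ (T 0 0 c) := by simp [starTripleSum]
    _ = 0 := by rw [hΦ, hc, starTripleSum_zero_right]

section Projections
variable {A : Type*} [Ring A] [StarRing A] [Algebra ℂ A] {q r : A}

/- `A` need not be a `StarModule`, so a scalar in the middle slot is placed under `star`, which
`starTripleSum` removes again. -/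
theorem starTripleSum_star_smul_one (μ : ℂ) (x z : A) :
    T x (star (μ • 1)) z = (μ * (α1 + α2 + α3)) • (x * z) + (μ * (α4 + α5 + α6)) • (z * x) := by
  simp only [starTripleSum, star_star, mul_smul_comm, smul_mul_assoc, mul_one, one_mul]
  module

theorem starTripleSum_of_mem_projections (hq : IsStarProjection q) (hqr : q + r = 1) {d : A}
    (hd : d = q ∨ d = r) :
    T d q r = 0 ∧ T d r q = 0 ∧ T q r d = 0 ∧ T r q d = 0 ∧ T q d r = 0 ∧ T r d q = 0 := by
  rcases hd with rfl | rfl <;> simp [starTripleSum, hq.peirce_simps hqr]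

theorem starTripleSum_of_mem_corner (hq : IsStarProjection q) (hqr : q + r = 1) {u : A}
    (hu : ∃ x, u = q * x * r) (y : A) :
    T u (star (q * y * r)) q = 0 ∧ T u (star (q * y * r)) r = 0 ∧ T u q (q * y * r) = 0 ∧
      T u r (q * y * r) = 0 ∧ T (q * y * r) q u = 0 ∧ T (q * y * r) r u = 0 := by
  obtain ⟨x, rfl⟩ := hu
  simp [starTripleSum, mul_assoc, hq.peirce_simps hqr]

theorem corner_eq_zero_of_starTripleSum_eq_zero (hq : IsStarProjection q) (hqr : q + r = 1)
    (hs : α1 + α2 + α3 + α4 + α5 + α6 ≠ 0) {x : A} (h1 : T x q r = 0) (h2 : T x r q = 0)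
    (h3 : T q r x = 0) (h4 : T r q x = 0) (h5 : T q x r = 0) (h6 : T r x q = 0) :
    q * x * r = 0 := by
  replace h1 := congrArg (q * · * r) h1
  replace h2 := congrArg (q * · * r) h2
  replace h3 := congrArg (q * · * r) h3
  replace h4 := congrArg (q * · * r) h4
  replace h5 := congrArg (r * · * q) h5
  replace h6 := congrArg (r * · * q) h6
  simp [starTripleSum, mul_assoc, mul_add, hq.peirce_simps hqr] at h1 h2 h3 h4 h5 h6
  have hstar : r * (star x * q) = star (q * (x * r)) := by
    simp [star_mul, mul_assoc, hq.peirce_simps hqr]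
  rw [hstar, star_eq_zero] at h5 h6
  rw [mul_assoc]
  by_contra hX
  simp only [hX, or_false] at h1 h2 h3 h4 h5 h6
  exact hs (by linear_combination h1 + h2 + h3 + h4 + h5 + h6)

theorem corner_mul_eq_zero_of_starTripleSum_eq_zero (hq : IsStarProjection q) (hqr : q + r = 1)
    (hs : α1 + α2 + α3 + α4 + α5 + α6 ≠ 0) {x : A} (y : A)
    (h1 : T x (star (q * y * r)) q = 0) (h2 : T x (star (q * y * r)) r = 0)
    (h3 : T x q (q * y * r) = 0) (h4 : T x r (q * y * r) = 0)
    (h5 : T (q * y * r) q x = 0) (h6 : T (q * y * r) r x = 0) :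
    q * x * q * y * r = 0 ∧ q * y * (r * x * r) = 0 := by
  replace h1 := congrArg (q * · * r) h1
  replace h2 := congrArg (q * · * r) h2
  replace h3 := congrArg (q * · * r) h3
  replace h4 := congrArg (q * · * r) h4
  replace h5 := congrArg (q * · * r) h5
  replace h6 := congrArg (q * · * r) h6
  simp [starTripleSum, mul_assoc, mul_add, add_mul, hq.peirce_simps hqr] at h1 h2 h3 h4 h5 h6
  simp only [mul_assoc]
  exact eq_zero_of_starTripleSum_relations hs (by linear_combination (norm := module) h1)
    (by linear_combination (norm := module) h2) (by linear_combination (norm := module) h3)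
    (by linear_combination (norm := module) h4) (by linear_combination (norm := module) h5)
    (by linear_combination (norm := module) h6)

end Projections

namespace PreservesStarTripleSum
variable {A B : Type*} [Ring A] [StarRing A] [Algebra ℂ A]
  [NonUnitalRing B] [Module ℂ B] [StarRing B] {Φ : A → B}

theorem map_add_of_starTripleSum_eq (hΦ : PreservesStarTripleSum α1 α2 α3 α4 α5 α6 Φ)
    (hΦ0 : Φ 0 = 0) {p p' a b w : A} (hpa : Φ (p + a) = Φ p + Φ a)
    (hpb : Φ (p' + b) = Φ p' + Φ b) (h1 : T p w p' = 0) (h2 : T p w b = b) (h3 : T a w p' = a)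
    (h4 : T a w b = 0) : Φ (a + b) = Φ a + Φ b := by
  have h := hΦ (p + a) w (p' + b)
  rw [hpa, hpb, starTripleSum_add_left, starTripleSum_add_right, starTripleSum_add_right,
    starTripleSum_add_left, starTripleSum_add_right, starTripleSum_add_right, ← hΦ, ← hΦ, ← hΦ,
    ← hΦ, h1, h2, h3, h4, hΦ0, zero_add, add_zero, zero_add, add_zero] at h
  rwa [add_comm b, add_comm (Φ b)] at h

variable {q r : A}

theorem map_projection_add (hΦ : PreservesStarTripleSum α1 α2 α3 α4 α5 α6 Φ)
    (hbij : Bijective Φ) (hs : α1 + α2 + α3 + α4 + α5 + α6 ≠ 0)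
    (hprime : ∀ x y : A, (∀ t : A, x * t * y = 0) → x = 0 ∨ y = 0)
    (hq : IsStarProjection q) (hqr : q + r = 1) (hq0 : q ≠ 0) (hr0 : r ≠ 0) {d u : A}
    (hd : d = q ∨ d = r) (hu : ∃ x, u = q * x * r) : Φ (d + u) = Φ d + Φ u := by
  have hΦ0 := hΦ.map_zero hbij.2
  obtain ⟨t, ht⟩ := hbij.2 (Φ d + Φ u)
  set D := t - (d + u)
  have kill_left (y z : A) (h : T d y z = 0 ∨ T u y z = 0) : T D y z = 0 :=
    map_sub_add_eq_zero_of_map_eq_zero (F := (T · y z)) (G := (T · (Φ y) (Φ z))) hbij.1 hΦ0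
      (starTripleSum_add_left · · y z) (starTripleSum_add_left · · (Φ y) (Φ z)) (hΦ · y z) ht h
  have kill_mid (x z : A) (h : T x d z = 0 ∨ T x u z = 0) : T x D z = 0 :=
    map_sub_add_eq_zero_of_map_eq_zero (F := (T x · z)) (G := (T (Φ x) · (Φ z))) hbij.1 hΦ0
      (starTripleSum_add_mid x · · z) (starTripleSum_add_mid (Φ x) · · (Φ z)) (hΦ x · z) ht h
  have kill_right (x y : A) (h : T x y d = 0 ∨ T x y u = 0) : T x y D = 0 :=
    map_sub_add_eq_zero_of_map_eq_zero (F := (T x y ·)) (G := (T (Φ x) (Φ y) ·)) hbij.1 hΦ0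
      (starTripleSum_add_right x y · ·) (starTripleSum_add_right (Φ x) (Φ y) · ·) (hΦ x y ·) ht h
  obtain ⟨d1, d2, d3, d4, d5, d6⟩ := starTripleSum_of_mem_projections hq hqr hd
  have h12 : q * D * r = 0 := corner_eq_zero_of_starTripleSum_eq_zero hq hqr hs
    (kill_left _ _ (.inl d1)) (kill_left _ _ (.inl d2)) (kill_right _ _ (.inl d3))
    (kill_right _ _ (.inl d4)) (kill_mid _ _ (.inl d5)) (kill_mid _ _ (.inl d6))
  have h21 : r * D * q = 0 := corner_eq_zero_of_starTripleSum_eq_zero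
    (hq.of_add_eq_one hqr) ((add_comm r q).trans hqr) hs
    (kill_left _ _ (.inl d2)) (kill_left _ _ (.inl d1)) (kill_right _ _ (.inl d4))
    (kill_right _ _ (.inl d3)) (kill_mid _ _ (.inl d6)) (kill_mid _ _ (.inl d5))
  have hdiag (y : A) : q * D * q * y * r = 0 ∧ q * y * (r * D * r) = 0 := by
    obtain ⟨u1, u2, u3, u4, u5, u6⟩ := starTripleSum_of_mem_corner hq hqr hu y
    exact corner_mul_eq_zero_of_starTripleSum_eq_zero hq hqr hs y
      (kill_left _ _ (.inr u1)) (kill_left _ _ (.inr u2)) (kill_left _ _ (.inr u3))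
      (kill_left _ _ (.inr u4)) (kill_right _ _ (.inr u5)) (kill_right _ _ (.inr u6))
  have h11 : q * D * q = 0 := (hprime _ _ fun y => (hdiag y).1).resolve_right hr0
  have h22 : r * D * r = 0 := (hprime _ _ fun y => (hdiag y).2).resolve_left hq0
  rw [← ht, ← sub_eq_zero.mp (eq_zero_of_peirce_eq_zero hqr h11 h12 h21 h22)]

theorem map_add_of_mem_corner (hΦ : PreservesStarTripleSum α1 α2 α3 α4 α5 α6 Φ)
    (hbij : Bijective Φ) (hs : α1 + α2 + α3 + α4 + α5 + α6 ≠ 0)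
    (hprime : ∀ x y : A, (∀ t : A, x * t * y = 0) → x = 0 ∨ y = 0)
    (hq : IsStarProjection q) (hqr : q + r = 1) (hq0 : q ≠ 0) (hr0 : r ≠ 0) {a b : A}
    (ha : ∃ x, a = q * x * r) (hb : ∃ x, b = q * x * r) : Φ (a + b) = Φ a + Φ b := by
  have hadd {d u : A} := hΦ.map_projection_add hbij hs hprime hq hqr hq0 hr0 (d := d) (u := u)
  have simps := hq.peirce_simps hqr
  obtain ⟨x, rfl⟩ := ha
  obtain ⟨y, rfl⟩ := hb
  by_cases hβ : α1 + α2 + α3 = 0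
  · have hγ : α4 + α5 + α6 ≠ 0 := fun hγ => hs (by linear_combination hβ + hγ)
    refine hΦ.map_add_of_starTripleSum_eq (hΦ.map_zero hbij.2)
      (w := star ((α4 + α5 + α6)⁻¹ • 1)) (hadd (.inr rfl) ⟨x, rfl⟩) (hadd (.inl rfl) ⟨y, rfl⟩)
      ?_ ?_ ?_ ?_ <;> simp [starTripleSum_star_smul_one, mul_assoc, simps, hβ, hγ]
  · refine hΦ.map_add_of_starTripleSum_eq (hΦ.map_zero hbij.2)
      (w := star ((α1 + α2 + α3)⁻¹ • 1)) (hadd (.inl rfl) ⟨x, rfl⟩) (hadd (.inr rfl) ⟨y, rfl⟩)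
      ?_ ?_ ?_ ?_ <;> simp [starTripleSum_star_smul_one, mul_assoc, simps, hβ]

end PreservesStarTripleSum

end TripleSum

theorem stmt5 {A B : Type*} [Ring A] [Algebra ℂ A] [StarRing A]
    [Ring B] [Algebra ℂ B] [StarRing B]
    (α1 α2 α3 α4 α5 α6 : ℂ)
    (hsum : α1 + α2 + α3 + α4 + α5 + α6 ≠ 0)
    (hprime : ∀ x y : A, (∀ t : A, x * t * y = 0) → x = 0 ∨ y = 0)
    (e : A) (hestar : star e = e) (heidem : e * e = e) (he0 : e ≠ 0) (he1 : e ≠ 1)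
    (Φ : A → B) (hbij : Function.Bijective Φ)
    (hΦ : ∀ a b c : A, Φ (starTripleSum α1 α2 α3 α4 α5 α6 a b c) =
      starTripleSum α1 α2 α3 α4 α5 α6 (Φ a) (Φ b) (Φ c))
    (q r : A) (hqr : (q = e ∧ r = 1 - e) ∨ (q = 1 - e ∧ r = e))
    (a b : A) (ha : ∃ x : A, a = q * x * r) (hb : ∃ x : A, b = q * x * r) :
    Φ (a + b) = Φ a + Φ b := by
  have he : IsStarProjection e := ⟨heidem, hestar⟩
  have he1' : 1 - e ≠ 0 := sub_ne_zero.mpr he1.symm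
  rcases hqr with ⟨rfl, rfl⟩ | ⟨rfl, rfl⟩
  · exact PreservesStarTripleSum.map_add_of_mem_corner hΦ hbij hsum hprime he
      (add_sub_cancel _ _) he0 he1' ha hb
  · exact PreservesStarTripleSum.map_add_of_mem_corner hΦ hbij hsum hprime he.one_sub
      (sub_add_cancel _ _) he1' he0 ha hb
end

section
/- Let A be a unital complex prime *-algebra with a nontrivial projection p₁, p₂ = 1 - p₁, Aᵢⱼ = pᵢApⱼ, B a unital complex *-algebra, α₁,...,α₆ ∈ ℂ with ∑αₖ ≠ 0. If Φ : A → B is a bijection preserving the sum of triple products α₁ab*c + α₂acb* + α₃b*ac + α₄cab* + α₅b*ca + α₆cb*a, then for i ≠ j and all a ∈ Aᵢᵢ, b ∈ Aᵢⱼ, c ∈ Aⱼᵢ, d ∈ Aⱼⱼ, Φ(a + b + c + d) = Φ(a) + Φ(b) + Φ(c) + Φ(d). -/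
namespace Stmt7Aux

lemma smul_cancel {A : Type*} [AddCommGroup A] [Module ℂ A] {c : ℂ} {x : A}
    (hc : c ≠ 0) (h : c • x = 0) : x = 0 := by
  have h2 := congrArg (fun y => c⁻¹ • y) h
  simpa [smul_smul, inv_mul_cancel₀ hc] using h2

section STS

variable {A : Type*} [Ring A] [Algebra ℂ A] [StarRing A]
variable (α1 α2 α3 α4 α5 α6 : ℂ)

lemma sts_add1 (x y u z : A) :
    starTripleSum α1 α2 α3 α4 α5 α6 (x + y) u z =
      starTripleSum α1 α2 α3 α4 α5 α6 x u z + starTripleSum α1 α2 α3 α4 α5 α6 y u z := by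
  simp only [starTripleSum, add_mul, mul_add, smul_add]
  abel

lemma sts_add3 (x u z w : A) :
    starTripleSum α1 α2 α3 α4 α5 α6 x u (z + w) =
      starTripleSum α1 α2 α3 α4 α5 α6 x u z + starTripleSum α1 α2 α3 α4 α5 α6 x u w := by
  simp only [starTripleSum, add_mul, mul_add, smul_add]
  abel

lemma sts_zero1 (u z : A) : starTripleSum α1 α2 α3 α4 α5 α6 0 u z = 0 := by
  simp [starTripleSum]

lemma sts_zero23 (x : A) : starTripleSum α1 α2 α3 α4 α5 α6 x 0 0 = 0 := by
  simp [starTripleSum]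

lemma sts_one_mid (x z : A) :
    starTripleSum α1 α2 α3 α4 α5 α6 x 1 z =
      (α1 + α2 + α3) • (x * z) + (α4 + α5 + α6) • (z * x) := by
  simp only [starTripleSum, star_one, mul_one, one_mul]
  module

end STS

section Push

variable {A B : Type*} [Ring A] [Algebra ℂ A] [StarRing A]
    [Ring B] [Algebra ℂ B] [StarRing B]
variable {α1 α2 α3 α4 α5 α6 : ℂ} {Φ : A → B}

variable (hΦ : ∀ a b c : A, Φ (starTripleSum α1 α2 α3 α4 α5 α6 a b c) =
      starTripleSum α1 α2 α3 α4 α5 α6 (Φ a) (Φ b) (Φ c))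

include hΦ

lemma push2R {W u v : A} (h : Φ W = Φ u + Φ v) (z : A) :
    Φ (starTripleSum α1 α2 α3 α4 α5 α6 W 1 z) =
      Φ (starTripleSum α1 α2 α3 α4 α5 α6 u 1 z) +
      Φ (starTripleSum α1 α2 α3 α4 α5 α6 v 1 z) := by
  rw [hΦ, h, sts_add1, ← hΦ, ← hΦ]

lemma push3R {W u v w : A} (h : Φ W = Φ u + Φ v + Φ w) (z : A) :
    Φ (starTripleSum α1 α2 α3 α4 α5 α6 W 1 z) =
      Φ (starTripleSum α1 α2 α3 α4 α5 α6 u 1 z) +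
      Φ (starTripleSum α1 α2 α3 α4 α5 α6 v 1 z) +
      Φ (starTripleSum α1 α2 α3 α4 α5 α6 w 1 z) := by
  rw [hΦ, h, sts_add1, sts_add1, ← hΦ, ← hΦ, ← hΦ]

lemma push4R {W u v w x : A} (h : Φ W = Φ u + Φ v + Φ w + Φ x) (z : A) :
    Φ (starTripleSum α1 α2 α3 α4 α5 α6 W 1 z) =
      Φ (starTripleSum α1 α2 α3 α4 α5 α6 u 1 z) +
      Φ (starTripleSum α1 α2 α3 α4 α5 α6 v 1 z) +
      Φ (starTripleSum α1 α2 α3 α4 α5 α6 w 1 z) +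
      Φ (starTripleSum α1 α2 α3 α4 α5 α6 x 1 z) := by
  rw [hΦ, h, sts_add1, sts_add1, sts_add1, ← hΦ, ← hΦ, ← hΦ, ← hΦ]

lemma push2L {W u v : A} (h : Φ W = Φ u + Φ v) (z : A) :
    Φ (starTripleSum α1 α2 α3 α4 α5 α6 z 1 W) =
      Φ (starTripleSum α1 α2 α3 α4 α5 α6 z 1 u) +
      Φ (starTripleSum α1 α2 α3 α4 α5 α6 z 1 v) := by
  rw [hΦ, h, sts_add3, ← hΦ, ← hΦ]

lemma push3L {W u v w : A} (h : Φ W = Φ u + Φ v + Φ w) (z : A) :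
    Φ (starTripleSum α1 α2 α3 α4 α5 α6 z 1 W) =
      Φ (starTripleSum α1 α2 α3 α4 α5 α6 z 1 u) +
      Φ (starTripleSum α1 α2 α3 α4 α5 α6 z 1 v) +
      Φ (starTripleSum α1 α2 α3 α4 α5 α6 z 1 w) := by
  rw [hΦ, h, sts_add3, sts_add3, ← hΦ, ← hΦ, ← hΦ]

lemma push4L {W u v w x : A} (h : Φ W = Φ u + Φ v + Φ w + Φ x) (z : A) :
    Φ (starTripleSum α1 α2 α3 α4 α5 α6 z 1 W) =
      Φ (starTripleSum α1 α2 α3 α4 α5 α6 z 1 u) +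
      Φ (starTripleSum α1 α2 α3 α4 α5 α6 z 1 v) +
      Φ (starTripleSum α1 α2 α3 α4 α5 α6 z 1 w) +
      Φ (starTripleSum α1 α2 α3 α4 α5 α6 z 1 x) := by
  rw [hΦ, h, sts_add3, sts_add3, sts_add3, ← hΦ, ← hΦ, ← hΦ, ← hΦ]

lemma phi_zero (hbij : Function.Bijective Φ) : Φ 0 = 0 := by
  obtain ⟨z, hz⟩ := hbij.2 0
  have h := hΦ 0 z z
  rw [sts_zero1] at h
  rw [h, hz, sts_zero23]

end Push

section CornerOff

variable {A B : Type*} [Ring A] [Algebra ℂ A] [StarRing A]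
    [Ring B] [Algebra ℂ B] [StarRing B]
variable {α1 α2 α3 α4 α5 α6 : ℂ} {Φ : A → B}

set_option maxHeartbeats 1000000 in
lemma corner_off
    (hsum : α1 + α2 + α3 + α4 + α5 + α6 ≠ 0)
    (hprime : ∀ x y : A, (∀ t : A, x * t * y = 0) → x = 0 ∨ y = 0)
    (hbij : Function.Bijective Φ)
    (hΦ : ∀ a b c : A, Φ (starTripleSum α1 α2 α3 α4 α5 α6 a b c) =
      starTripleSum α1 α2 α3 α4 α5 α6 (Φ a) (Φ b) (Φ c))
    (p q : A) (hpp : p * p = p) (hqq : q * q = q) (hpq : p * q = 0) (hqp : q * p = 0)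
    (hp0 : p ≠ 0) (hq0 : q ≠ 0)
    (T xa xb xc xd : A)
    (hT : Φ T = Φ (p*xa*p) + Φ (p*xb*q) + Φ (q*xc*p) + Φ (q*xd*q)) :
    p * T * q = p * xb * q := by
  have hinj := hbij.1
  have hΦ0 : Φ 0 = 0 := phi_zero hΦ hbij
  set β := α1 + α2 + α3 with hβdef
  set γ := α4 + α5 + α6 with hγdef
  have hα : β + γ ≠ 0 := by
    have h : α1 + α2 + α3 + α4 + α5 + α6 = β + γ := by rw [hβdef, hγdef]; ring
    rwa [h] at hsum
  have smid : ∀ x z : A, starTripleSum α1 α2 α3 α4 α5 α6 x 1 z = β • (x*z) + γ • (z*x) := by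
    intro x z
    rw [sts_one_mid, ← hβdef, ← hγdef]
  have hpq' : ∀ z : A, p * (q * z) = 0 := fun z => by rw [← mul_assoc, hpq, zero_mul]
  have hqp' : ∀ z : A, q * (p * z) = 0 := fun z => by rw [← mul_assoc, hqp, zero_mul]
  have hpp' : ∀ z : A, p * (p * z) = p * z := fun z => by rw [← mul_assoc, hpp]
  have hqq' : ∀ z : A, q * (q * z) = q * z := fun z => by rw [← mul_assoc, hqq]
  -- step 1
  have key1 : ∀ v : A,
      Φ (starTripleSum α1 α2 α3 α4 α5 α6 T 1 (q*v*p)) =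
        Φ (γ • ((q*v*p) * (p*xa*p))) +
        Φ (β • ((p*xb*q) * (q*v*p)) + γ • ((q*v*p) * (p*xb*q))) +
        Φ (β • ((q*xd*q) * (q*v*p))) := by
    intro v
    have h4 := push4R hΦ hT (q*v*p)
    have ea : starTripleSum α1 α2 α3 α4 α5 α6 (p*xa*p) 1 (q*v*p)
        = γ • ((q*v*p) * (p*xa*p)) := by
      rw [smid]
      have h0 : (p*xa*p) * (q*v*p) = 0 := by
        simp [mul_assoc, hpq', hqp', hpp', hqq']
      rw [h0, smul_zero, zero_add]
    have ec : starTripleSum α1 α2 α3 α4 α5 α6 (q*xc*p) 1 (q*v*p) = 0 := by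
      rw [smid]
      have h1 : (q*xc*p) * (q*v*p) = 0 := by simp [mul_assoc, hpq', hqp', hpp', hqq']
      have h2 : (q*v*p) * (q*xc*p) = 0 := by simp [mul_assoc, hpq', hqp', hpp', hqq']
      rw [h1, h2]; simp
    have ed : starTripleSum α1 α2 α3 α4 α5 α6 (q*xd*q) 1 (q*v*p)
        = β • ((q*xd*q) * (q*v*p)) := by
      rw [smid]
      have h0 : (q*v*p) * (q*xd*q) = 0 := by simp [mul_assoc, hpq', hqp', hpp', hqq']
      rw [h0, smul_zero, add_zero]
    rw [h4, ea, ec, ed, hΦ0, add_zero, smid]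
  -- chain for R1
  have chain1 : ∀ u v : A,
      Φ (starTripleSum α1 α2 α3 α4 α5 α6 (q*u*p) 1
          (starTripleSum α1 α2 α3 α4 α5 α6 T 1 (q*v*p))) =
      Φ (starTripleSum α1 α2 α3 α4 α5 α6 (q*u*p) 1
          (β • ((p*xb*q) * (q*v*p)) + γ • ((q*v*p) * (p*xb*q)))) := by
    intro u v
    have h3 := push3L hΦ (key1 v) (q*u*p)
    have z1 : starTripleSum α1 α2 α3 α4 α5 α6 (q*u*p) 1 (γ • ((q*v*p)*(p*xa*p))) = 0 := by
      rw [smid]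
      simp [mul_smul_comm, smul_mul_assoc, mul_assoc, hpq', hqp', hpp', hqq']
    have z3 : starTripleSum α1 α2 α3 α4 α5 α6 (q*u*p) 1 (β • ((q*xd*q)*(q*v*p))) = 0 := by
      rw [smid]
      simp [mul_smul_comm, smul_mul_assoc, mul_assoc, hpq', hqp', hpp', hqq']
    rw [h3, z1, z3, hΦ0, zero_add, add_zero]
  have R1 : ∀ u v : A,
      (β*β) • ((q*u*p) * (p*T*q - p*xb*q) * (q*v*p)) +
      (γ*γ) • ((q*v*p) * (p*T*q - p*xb*q) * (q*u*p)) = 0 := by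
    intro u v
    have EQ := hinj (chain1 u v)
    have expand : (β*β) • ((q*u*p) * (p*T*q - p*xb*q) * (q*v*p)) +
        (γ*γ) • ((q*v*p) * (p*T*q - p*xb*q) * (q*u*p)) =
        starTripleSum α1 α2 α3 α4 α5 α6 (q*u*p) 1
          (starTripleSum α1 α2 α3 α4 α5 α6 T 1 (q*v*p)) -
        starTripleSum α1 α2 α3 α4 α5 α6 (q*u*p) 1
          (β • ((p*xb*q) * (q*v*p)) + γ • ((q*v*p) * (p*xb*q))) := by
      simp only [smid, mul_sub, sub_mul, mul_add, add_mul, smul_add, smul_sub, smul_smul,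
        mul_smul_comm, smul_mul_assoc, mul_assoc, hpq', hqp', hpp', hqq', hpq, hqp, hpp, hqq,
        mul_zero, zero_mul, smul_zero, add_zero, zero_add]
      try module
    rw [expand, EQ, sub_self]
  -- chain for R3
  have chain3 : ∀ u v : A,
      Φ (starTripleSum α1 α2 α3 α4 α5 α6
          (starTripleSum α1 α2 α3 α4 α5 α6 T 1 (q*v*p)) 1 (q*u*p)) =
      Φ (starTripleSum α1 α2 α3 α4 α5 α6
          (β • ((p*xb*q) * (q*v*p)) + γ • ((q*v*p) * (p*xb*q))) 1 (q*u*p)) := by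
    intro u v
    have h3 := push3R hΦ (key1 v) (q*u*p)
    have z1 : starTripleSum α1 α2 α3 α4 α5 α6 (γ • ((q*v*p)*(p*xa*p))) 1 (q*u*p) = 0 := by
      rw [smid]
      simp [mul_smul_comm, smul_mul_assoc, mul_assoc, hpq', hqp', hpp', hqq']
    have z3 : starTripleSum α1 α2 α3 α4 α5 α6 (β • ((q*xd*q)*(q*v*p))) 1 (q*u*p) = 0 := by
      rw [smid]
      simp [mul_smul_comm, smul_mul_assoc, mul_assoc, hpq', hqp', hpp', hqq']
    rw [h3, z1, z3, hΦ0, zero_add, add_zero]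
  have R3 : ∀ u v : A,
      (β*γ) • ((q*u*p) * (p*T*q - p*xb*q) * (q*v*p)) +
      (β*γ) • ((q*v*p) * (p*T*q - p*xb*q) * (q*u*p)) = 0 := by
    intro u v
    have EQ := hinj (chain3 u v)
    have expand : (β*γ) • ((q*u*p) * (p*T*q - p*xb*q) * (q*v*p)) +
        (β*γ) • ((q*v*p) * (p*T*q - p*xb*q) * (q*u*p)) =
        starTripleSum α1 α2 α3 α4 α5 α6
          (starTripleSum α1 α2 α3 α4 α5 α6 T 1 (q*v*p)) 1 (q*u*p) -
        starTripleSum α1 α2 α3 α4 α5 α6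
          (β • ((p*xb*q) * (q*v*p)) + γ • ((q*v*p) * (p*xb*q))) 1 (q*u*p) := by
      simp only [smid, mul_sub, sub_mul, mul_add, add_mul, smul_add, smul_sub, smul_smul,
        mul_smul_comm, smul_mul_assoc, mul_assoc, hpq', hqp', hpp', hqq', hpq, hqp, hpp, hqq,
        mul_zero, zero_mul, smul_zero, add_zero, zero_add]
      try module
    rw [expand, EQ, sub_self]
  -- abbreviate M
  set M := p*T*q - p*xb*q with hMdef
  have hMq : M * q = M := by
    rw [hMdef]
    simp [sub_mul, mul_assoc, hqq', hqq]
  have hpM : p * M = M := by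
    rw [hMdef]
    simp [mul_sub, mul_assoc, hpp', hpp]
  have ASym : ∀ u v : A, (q*u*p)*M*(q*v*p) + (q*v*p)*M*(q*u*p) = 0 := by
    intro u v
    apply smul_cancel (mul_ne_zero hα hα)
    have h1 := R1 u v
    have h2 := R1 v u
    have h3 := R3 u v
    have hcomb : ((β+γ)*(β+γ)) • ((q*u*p)*M*(q*v*p) + (q*v*p)*M*(q*u*p)) =
        ((β*β) • ((q*u*p)*M*(q*v*p)) + (γ*γ) • ((q*v*p)*M*(q*u*p))) +
        ((β*β) • ((q*v*p)*M*(q*u*p)) + (γ*γ) • ((q*u*p)*M*(q*v*p))) +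
        (((β*γ) • ((q*u*p)*M*(q*v*p)) + (β*γ) • ((q*v*p)*M*(q*u*p))) +
         ((β*γ) • ((q*u*p)*M*(q*v*p)) + (β*γ) • ((q*v*p)*M*(q*u*p)))) := by
      try module
    rw [hcomb, h1, h2, h3]
    simp
  have hMsq : ∀ u : A, (q*u*p)*M*(q*u*p) = 0 := by
    intro u
    have h := ASym u u
    have h2 : (2:ℂ) • ((q*u*p)*M*(q*u*p)) = 0 := by rw [two_smul]; exact h
    exact smul_cancel two_ne_zero h2
  have hperp : ∀ u v : A, ((q*u*p)*M) * v * (M*(q*u*p)) = 0 := by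
    intro u v
    have e1 : q*(u*(p*(M*(q*v))))*p = (q*u*p)*M*(q*v*p) := by
      simp [mul_assoc]
    have key := ASym u (u*(p*(M*(q*v))))
    rw [e1] at key
    have e2 : (q*u*p)*M*((q*u*p)*M*(q*v*p)) = ((q*u*p)*M*(q*u*p))*(M*(q*v*p)) := by
      simp [mul_assoc]
    rw [e2, hMsq u, zero_mul, zero_add] at key
    calc ((q*u*p)*M)*v*(M*(q*u*p))
        = ((q*u*p)*(M*q))*v*((p*M)*(q*u*p)) := by rw [hMq, hpM]
      _ = ((q*u*p)*M*(q*v*p))*M*(q*u*p) := by simp [mul_assoc]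
      _ = 0 := key
  have hdich : ∀ u : A, (q*u*p)*M = 0 ∨ M*(q*u*p) = 0 := fun u => hprime _ _ (hperp u)
  have hM0 : M = 0 := by
    by_cases hL : ∀ u : A, (q*u*p)*M = 0
    · have hqM : ∀ t : A, q * t * M = 0 := by
        intro t
        have h1 : q*t*M = (q*t*p)*M := by
          conv_lhs => rw [← hpM]
          rw [← mul_assoc]
        rw [h1]; exact hL t
      rcases hprime q M hqM with h | h
      · exact absurd h hq0
      · exact h
    · push_neg at hL
      obtain ⟨u₁, hu₁⟩ := hL
      have hMu₁ : M*(q*u₁*p) = 0 := (hdich u₁).resolve_left hu₁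
      have hR : ∀ u : A, M*(q*u*p) = 0 := by
        intro u
        rcases hdich u with h | h
        · rcases hdich (u₁ + u) with h' | h'
          · exfalso
            apply hu₁
            have expand : (q*(u₁+u)*p)*M = (q*u₁*p)*M + (q*u*p)*M := by
              simp [mul_add, add_mul]
            rw [expand, h, add_zero] at h'
            exact h'
          · have expand : M*(q*(u₁+u)*p) = M*(q*u₁*p) + M*(q*u*p) := by
              simp [mul_add, add_mul]
            rw [expand, hMu₁, zero_add] at h'
            exact h'
        · exact h
      have hMtp : ∀ t : A, M * t * p = 0 := by
        intro t
        have h1 : M*t*p = M*(q*t*p) := by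
          conv_lhs => rw [← hMq]
          simp [mul_assoc]
        rw [h1]
        have := hR t
        rw [← mul_assoc, ← mul_assoc] at this ⊢
        exact this
      rcases hprime M p hMtp with h | h
      · exact h
      · exact absurd h hp0
  rw [hMdef] at hM0
  exact sub_eq_zero.mp hM0

end CornerOff

section CornerDiag

variable {A B : Type*} [Ring A] [Algebra ℂ A] [StarRing A]
    [Ring B] [Algebra ℂ B] [StarRing B]
variable {α1 α2 α3 α4 α5 α6 : ℂ} {Φ : A → B}

set_option maxHeartbeats 4000000 in
lemma corner_diag
    (hsum : α1 + α2 + α3 + α4 + α5 + α6 ≠ 0)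
    (hprime : ∀ x y : A, (∀ t : A, x * t * y = 0) → x = 0 ∨ y = 0)
    (hbij : Function.Bijective Φ)
    (hΦ : ∀ a b c : A, Φ (starTripleSum α1 α2 α3 α4 α5 α6 a b c) =
      starTripleSum α1 α2 α3 α4 α5 α6 (Φ a) (Φ b) (Φ c))
    (p q : A) (hpp : p * p = p) (hqq : q * q = q) (hpq : p * q = 0) (hqp : q * p = 0)
    (hp0 : p ≠ 0) (hq0 : q ≠ 0)
    (T xa xb xc xd : A)
    (hT : Φ T = Φ (p*xa*p) + Φ (p*xb*q) + Φ (q*xc*p) + Φ (q*xd*q)) :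
    p * T * p = p * xa * p := by
  have hinj := hbij.1
  have hΦ0 : Φ 0 = 0 := phi_zero hΦ hbij
  set β := α1 + α2 + α3 with hβdef
  set γ := α4 + α5 + α6 with hγdef
  have hα : β + γ ≠ 0 := by
    have h : α1 + α2 + α3 + α4 + α5 + α6 = β + γ := by rw [hβdef, hγdef]; ring
    rwa [h] at hsum
  have smid : ∀ x z : A, starTripleSum α1 α2 α3 α4 α5 α6 x 1 z = β • (x*z) + γ • (z*x) := by
    intro x z
    rw [sts_one_mid, ← hβdef, ← hγdef]
  have hpq' : ∀ z : A, p * (q * z) = 0 := fun z => by rw [← mul_assoc, hpq, zero_mul]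
  have hqp' : ∀ z : A, q * (p * z) = 0 := fun z => by rw [← mul_assoc, hqp, zero_mul]
  have hpp' : ∀ z : A, p * (p * z) = p * z := fun z => by rw [← mul_assoc, hpp]
  have hqq' : ∀ z : A, q * (q * z) = q * z := fun z => by rw [← mul_assoc, hqq]
  -- ===== step 1 (first slot variant) : S T 1 p =====
  have key1 :
      Φ (starTripleSum α1 α2 α3 α4 α5 α6 T 1 p) =
        Φ (β • (p*xa*p) + γ • (p*xa*p)) + Φ (γ • (p*xb*q)) + Φ (β • (q*xc*p)) := by
    have h4 := push4R hΦ hT p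
    have ea : starTripleSum α1 α2 α3 α4 α5 α6 (p*xa*p) 1 p
        = β • (p*xa*p) + γ • (p*xa*p) := by
      rw [smid]; simp [mul_assoc, hpp', hpp]
    have eb : starTripleSum α1 α2 α3 α4 α5 α6 (p*xb*q) 1 p = γ • (p*xb*q) := by
      rw [smid]; simp [mul_assoc, hpq', hqp', hpp', hqq', hpq, hqp, hpp, hqq]
    have ec : starTripleSum α1 α2 α3 α4 α5 α6 (q*xc*p) 1 p = β • (q*xc*p) := by
      rw [smid]; simp [mul_assoc, hpq', hqp', hpp', hqq', hpq, hqp, hpp, hqq]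
    have ed : starTripleSum α1 α2 α3 α4 α5 α6 (q*xd*q) 1 p = 0 := by
      rw [smid]; simp [mul_assoc, hpq', hqp', hpp', hqq', hpq, hqp, hpp, hqq]
    rw [h4, ea, eb, ec, ed, hΦ0, add_zero]
  -- ===== step 2 =====
  have key2 : ∀ v : A,
      Φ (starTripleSum α1 α2 α3 α4 α5 α6 (starTripleSum α1 α2 α3 α4 α5 α6 T 1 p) 1 (p*v*q)) =
        Φ ((β*(β+γ)) • ((p*xa*p)*(p*v*q))) +
        Φ ((β*β) • ((q*xc*p)*(p*v*q)) + (γ*β) • ((p*v*q)*(q*xc*p))) := by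
    intro v
    have h3 := push3R hΦ key1 (p*v*q)
    have e1 : starTripleSum α1 α2 α3 α4 α5 α6 (β • (p*xa*p) + γ • (p*xa*p)) 1 (p*v*q)
        = (β*(β+γ)) • ((p*xa*p)*(p*v*q)) := by
      rw [smid]
      simp only [mul_add, add_mul, smul_add, smul_smul, mul_smul_comm, smul_mul_assoc,
        mul_assoc, hpq', hqp', hpp', hqq', hpq, hqp, hpp, hqq,
        mul_zero, zero_mul, smul_zero, add_zero, zero_add]
      try module
    have e2 : starTripleSum α1 α2 α3 α4 α5 α6 (γ • (p*xb*q)) 1 (p*v*q) = 0 := by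
      rw [smid]
      simp [mul_smul_comm, smul_mul_assoc, mul_assoc, hpq', hqp', hpp', hqq']
    have e3 : starTripleSum α1 α2 α3 α4 α5 α6 (β • (q*xc*p)) 1 (p*v*q)
        = (β*β) • ((q*xc*p)*(p*v*q)) + (γ*β) • ((p*v*q)*(q*xc*p)) := by
      rw [smid]
      simp only [smul_smul, mul_smul_comm, smul_mul_assoc,
        mul_assoc, hpp', hqq', hpp, hqq]
      try module
    rw [h3, e1, e2, e3, hΦ0, add_zero]
  -- ===== step 3 =====
  have key3 : ∀ v w : A,
      Φ (starTripleSum α1 α2 α3 α4 α5 α6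
          (starTripleSum α1 α2 α3 α4 α5 α6
            (starTripleSum α1 α2 α3 α4 α5 α6 T 1 p) 1 (p*v*q)) 1 (q*w*p)) =
        Φ ((β*(β*(β+γ))) • ((p*xa*p)*(p*v*q)*(q*w*p)) +
           (γ*(β*(β+γ))) • ((q*w*p)*((p*xa*p)*(p*v*q)))) +
        Φ ((β*(β*β)) • ((q*xc*p)*(p*v*q)*(q*w*p)) +
           (γ*(γ*β)) • ((q*w*p)*((p*v*q)*(q*xc*p)))) := by
    intro v w
    have h2 := push2R hΦ (key2 v) (q*w*p)
    have e1 : starTripleSum α1 α2 α3 α4 α5 α6 ((β*(β+γ)) • ((p*xa*p)*(p*v*q))) 1 (q*w*p)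
        = (β*(β*(β+γ))) • ((p*xa*p)*(p*v*q)*(q*w*p)) +
          (γ*(β*(β+γ))) • ((q*w*p)*((p*xa*p)*(p*v*q))) := by
      rw [smid]
      simp only [smul_smul, mul_smul_comm, smul_mul_assoc, mul_assoc]
      try module
    have e2 : starTripleSum α1 α2 α3 α4 α5 α6
        ((β*β) • ((q*xc*p)*(p*v*q)) + (γ*β) • ((p*v*q)*(q*xc*p))) 1 (q*w*p)
        = (β*(β*β)) • ((q*xc*p)*(p*v*q)*(q*w*p)) +
          (γ*(γ*β)) • ((q*w*p)*((p*v*q)*(q*xc*p))) := by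
      rw [smid]
      simp only [mul_add, add_mul, smul_add, smul_smul, mul_smul_comm, smul_mul_assoc,
        mul_assoc, hpq', hqp', hpp', hqq', hpq, hqp, hpp, hqq,
        mul_zero, zero_mul, smul_zero, add_zero, zero_add]
      try module
    rw [h2, e1, e2]
  -- ===== chain J1 =====
  have chainJ1 : ∀ u v w : A,
      Φ (starTripleSum α1 α2 α3 α4 α5 α6 (q*u*p) 1
          (starTripleSum α1 α2 α3 α4 α5 α6
            (starTripleSum α1 α2 α3 α4 α5 α6
              (starTripleSum α1 α2 α3 α4 α5 α6 T 1 p) 1 (p*v*q)) 1 (q*w*p))) =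
      Φ ((β*(β*(β*(β+γ)))) • ((q*u*p)*((p*xa*p)*(p*v*q)*(q*w*p))) +
         (γ*(γ*(β*(β+γ)))) • (((q*w*p)*((p*xa*p)*(p*v*q)))*(q*u*p))) := by
    intro u v w
    have h2 := push2L hΦ (key3 v w) (q*u*p)
    have eA : starTripleSum α1 α2 α3 α4 α5 α6 (q*u*p) 1
        ((β*(β*(β+γ))) • ((p*xa*p)*(p*v*q)*(q*w*p)) +
         (γ*(β*(β+γ))) • ((q*w*p)*((p*xa*p)*(p*v*q))))
        = (β*(β*(β*(β+γ)))) • ((q*u*p)*((p*xa*p)*(p*v*q)*(q*w*p))) +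
          (γ*(γ*(β*(β+γ)))) • (((q*w*p)*((p*xa*p)*(p*v*q)))*(q*u*p)) := by
      rw [smid]
      simp only [mul_add, add_mul, smul_add, smul_smul, mul_smul_comm, smul_mul_assoc,
        mul_assoc, hpq', hqp', hpp', hqq', hpq, hqp, hpp, hqq,
        mul_zero, zero_mul, smul_zero, add_zero, zero_add]
      try module
    have eC : starTripleSum α1 α2 α3 α4 α5 α6 (q*u*p) 1
        ((β*(β*β)) • ((q*xc*p)*(p*v*q)*(q*w*p)) +
         (γ*(γ*β)) • ((q*w*p)*((p*v*q)*(q*xc*p)))) = 0 := by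
      rw [smid]
      simp [mul_add, add_mul, mul_smul_comm, smul_mul_assoc, mul_assoc,
        hpq', hqp', hpp', hqq']
    rw [h2, eA, eC, hΦ0, add_zero]
  set m := p*T*p - p*xa*p with hmdef
  have J1 : ∀ u v w : A,
      ((β+γ)*(β*(β*β))) • ((q*u*p) * m * ((p*v*q)*(q*w*p))) +
      ((β+γ)*(β*(γ*γ))) • ((q*w*p) * m * ((p*v*q)*(q*u*p))) = 0 := by
    intro u v w
    have EQ := hinj (chainJ1 u v w)
    have expand : ((β+γ)*(β*(β*β))) • ((q*u*p) * m * ((p*v*q)*(q*w*p))) +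
        ((β+γ)*(β*(γ*γ))) • ((q*w*p) * m * ((p*v*q)*(q*u*p))) =
        starTripleSum α1 α2 α3 α4 α5 α6 (q*u*p) 1
          (starTripleSum α1 α2 α3 α4 α5 α6
            (starTripleSum α1 α2 α3 α4 α5 α6
              (starTripleSum α1 α2 α3 α4 α5 α6 T 1 p) 1 (p*v*q)) 1 (q*w*p)) -
        ((β*(β*(β*(β+γ)))) • ((q*u*p)*((p*xa*p)*(p*v*q)*(q*w*p))) +
         (γ*(γ*(β*(β+γ)))) • (((q*w*p)*((p*xa*p)*(p*v*q)))*(q*u*p))) := by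
      simp only [smid, hmdef, mul_sub, sub_mul, mul_add, add_mul, smul_add, smul_sub,
        smul_smul, mul_smul_comm, smul_mul_assoc, mul_assoc,
        hpq', hqp', hpp', hqq', hpq, hqp, hpp, hqq,
        mul_zero, zero_mul, smul_zero, add_zero, zero_add]
      try module
    rw [expand, EQ, sub_self]
  -- ===== chain J2 (third slot variant) =====
  have key1e :
      Φ (starTripleSum α1 α2 α3 α4 α5 α6 p 1 T) =
        Φ (β • (p*xa*p) + γ • (p*xa*p)) + Φ (β • (p*xb*q)) + Φ (γ • (q*xc*p)) := by
    have h4 := push4L hΦ hT p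
    have ea : starTripleSum α1 α2 α3 α4 α5 α6 p 1 (p*xa*p)
        = β • (p*xa*p) + γ • (p*xa*p) := by
      rw [smid]; simp [mul_assoc, hpp', hpp]
    have eb : starTripleSum α1 α2 α3 α4 α5 α6 p 1 (p*xb*q) = β • (p*xb*q) := by
      rw [smid]; simp [mul_assoc, hpq', hqp', hpp', hqq', hpq, hqp, hpp, hqq]
    have ec : starTripleSum α1 α2 α3 α4 α5 α6 p 1 (q*xc*p) = γ • (q*xc*p) := by
      rw [smid]; simp [mul_assoc, hpq', hqp', hpp', hqq', hpq, hqp, hpp, hqq]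
    have ed : starTripleSum α1 α2 α3 α4 α5 α6 p 1 (q*xd*q) = 0 := by
      rw [smid]; simp [mul_assoc, hpq', hqp', hpp', hqq', hpq, hqp, hpp, hqq]
    rw [h4, ea, eb, ec, ed, hΦ0, add_zero]
  have key2e : ∀ v : A,
      Φ (starTripleSum α1 α2 α3 α4 α5 α6 (p*v*q) 1 (starTripleSum α1 α2 α3 α4 α5 α6 p 1 T)) =
        Φ ((γ*(β+γ)) • ((p*xa*p)*(p*v*q))) +
        Φ ((β*γ) • ((p*v*q)*(q*xc*p)) + (γ*γ) • ((q*xc*p)*(p*v*q))) := by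
    intro v
    have h3 := push3L hΦ key1e (p*v*q)
    have e1 : starTripleSum α1 α2 α3 α4 α5 α6 (p*v*q) 1 (β • (p*xa*p) + γ • (p*xa*p))
        = (γ*(β+γ)) • ((p*xa*p)*(p*v*q)) := by
      rw [smid]
      simp only [mul_add, add_mul, smul_add, smul_smul, mul_smul_comm, smul_mul_assoc,
        mul_assoc, hpq', hqp', hpp', hqq', hpq, hqp, hpp, hqq,
        mul_zero, zero_mul, smul_zero, add_zero, zero_add]
      try module
    have e2 : starTripleSum α1 α2 α3 α4 α5 α6 (p*v*q) 1 (β • (p*xb*q)) = 0 := by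
      rw [smid]
      simp [mul_smul_comm, smul_mul_assoc, mul_assoc, hpq', hqp', hpp', hqq']
    have e3 : starTripleSum α1 α2 α3 α4 α5 α6 (p*v*q) 1 (γ • (q*xc*p))
        = (β*γ) • ((p*v*q)*(q*xc*p)) + (γ*γ) • ((q*xc*p)*(p*v*q)) := by
      rw [smid]
      simp only [smul_smul, mul_smul_comm, smul_mul_assoc, mul_assoc, hpp', hqq', hpp, hqq]
      try module
    rw [h3, e1, e2, e3, hΦ0, add_zero]
  have key3e : ∀ v w : A,
      Φ (starTripleSum α1 α2 α3 α4 α5 α6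
          (starTripleSum α1 α2 α3 α4 α5 α6 (p*v*q) 1
            (starTripleSum α1 α2 α3 α4 α5 α6 p 1 T)) 1 (q*w*p)) =
        Φ ((β*(γ*(β+γ))) • ((p*xa*p)*(p*v*q)*(q*w*p)) +
           (γ*(γ*(β+γ))) • ((q*w*p)*((p*xa*p)*(p*v*q)))) +
        Φ ((β*(γ*γ)) • ((q*xc*p)*(p*v*q)*(q*w*p)) +
           (γ*(β*γ)) • ((q*w*p)*((p*v*q)*(q*xc*p)))) := by
    intro v w
    have h2 := push2R hΦ (key2e v) (q*w*p)
    have e1 : starTripleSum α1 α2 α3 α4 α5 α6 ((γ*(β+γ)) • ((p*xa*p)*(p*v*q))) 1 (q*w*p)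
        = (β*(γ*(β+γ))) • ((p*xa*p)*(p*v*q)*(q*w*p)) +
          (γ*(γ*(β+γ))) • ((q*w*p)*((p*xa*p)*(p*v*q))) := by
      rw [smid]
      simp only [smul_smul, mul_smul_comm, smul_mul_assoc, mul_assoc]
      try module
    have e2 : starTripleSum α1 α2 α3 α4 α5 α6
        ((β*γ) • ((p*v*q)*(q*xc*p)) + (γ*γ) • ((q*xc*p)*(p*v*q))) 1 (q*w*p)
        = (β*(γ*γ)) • ((q*xc*p)*(p*v*q)*(q*w*p)) +
          (γ*(β*γ)) • ((q*w*p)*((p*v*q)*(q*xc*p))) := by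
      rw [smid]
      simp only [mul_add, add_mul, smul_add, smul_smul, mul_smul_comm, smul_mul_assoc,
        mul_assoc, hpq', hqp', hpp', hqq', hpq, hqp, hpp, hqq,
        mul_zero, zero_mul, smul_zero, add_zero, zero_add]
      try module
    rw [h2, e1, e2]
  have chainJ2 : ∀ u v w : A,
      Φ (starTripleSum α1 α2 α3 α4 α5 α6 (q*u*p) 1
          (starTripleSum α1 α2 α3 α4 α5 α6
            (starTripleSum α1 α2 α3 α4 α5 α6 (p*v*q) 1
              (starTripleSum α1 α2 α3 α4 α5 α6 p 1 T)) 1 (q*w*p))) =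
      Φ ((β*(β*(γ*(β+γ)))) • ((q*u*p)*((p*xa*p)*(p*v*q)*(q*w*p))) +
         (γ*(γ*(γ*(β+γ)))) • (((q*w*p)*((p*xa*p)*(p*v*q)))*(q*u*p))) := by
    intro u v w
    have h2 := push2L hΦ (key3e v w) (q*u*p)
    have eA : starTripleSum α1 α2 α3 α4 α5 α6 (q*u*p) 1
        ((β*(γ*(β+γ))) • ((p*xa*p)*(p*v*q)*(q*w*p)) +
         (γ*(γ*(β+γ))) • ((q*w*p)*((p*xa*p)*(p*v*q))))
        = (β*(β*(γ*(β+γ)))) • ((q*u*p)*((p*xa*p)*(p*v*q)*(q*w*p))) +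
          (γ*(γ*(γ*(β+γ)))) • (((q*w*p)*((p*xa*p)*(p*v*q)))*(q*u*p)) := by
      rw [smid]
      simp only [mul_add, add_mul, smul_add, smul_smul, mul_smul_comm, smul_mul_assoc,
        mul_assoc, hpq', hqp', hpp', hqq', hpq, hqp, hpp, hqq,
        mul_zero, zero_mul, smul_zero, add_zero, zero_add]
      try module
    have eC : starTripleSum α1 α2 α3 α4 α5 α6 (q*u*p) 1
        ((β*(γ*γ)) • ((q*xc*p)*(p*v*q)*(q*w*p)) +
         (γ*(β*γ)) • ((q*w*p)*((p*v*q)*(q*xc*p)))) = 0 := by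
      rw [smid]
      simp [mul_add, add_mul, mul_smul_comm, smul_mul_assoc, mul_assoc,
        hpq', hqp', hpp', hqq']
    rw [h2, eA, eC, hΦ0, add_zero]
  have J2 : ∀ u v w : A,
      ((β+γ)*(γ*(β*β))) • ((q*u*p) * m * ((p*v*q)*(q*w*p))) +
      ((β+γ)*(γ*(γ*γ))) • ((q*w*p) * m * ((p*v*q)*(q*u*p))) = 0 := by
    intro u v w
    have EQ := hinj (chainJ2 u v w)
    have expand : ((β+γ)*(γ*(β*β))) • ((q*u*p) * m * ((p*v*q)*(q*w*p))) +
        ((β+γ)*(γ*(γ*γ))) • ((q*w*p) * m * ((p*v*q)*(q*u*p))) =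
        starTripleSum α1 α2 α3 α4 α5 α6 (q*u*p) 1
          (starTripleSum α1 α2 α3 α4 α5 α6
            (starTripleSum α1 α2 α3 α4 α5 α6 (p*v*q) 1
              (starTripleSum α1 α2 α3 α4 α5 α6 p 1 T)) 1 (q*w*p)) -
        ((β*(β*(γ*(β+γ)))) • ((q*u*p)*((p*xa*p)*(p*v*q)*(q*w*p))) +
         (γ*(γ*(γ*(β+γ)))) • (((q*w*p)*((p*xa*p)*(p*v*q)))*(q*u*p))) := by
      simp only [smid, hmdef, mul_sub, sub_mul, mul_add, add_mul, smul_add, smul_sub,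
        smul_smul, mul_smul_comm, smul_mul_assoc, mul_assoc,
        hpq', hqp', hpp', hqq', hpq, hqp, hpp, hqq,
        mul_zero, zero_mul, smul_zero, add_zero, zero_add]
      try module
    rw [expand, EQ, sub_self]
  -- ===== chain J3 =====
  have chainJ3 : ∀ u v w : A,
      Φ (starTripleSum α1 α2 α3 α4 α5 α6
          (starTripleSum α1 α2 α3 α4 α5 α6
            (starTripleSum α1 α2 α3 α4 α5 α6
              (starTripleSum α1 α2 α3 α4 α5 α6 T 1 p) 1 (p*v*q)) 1 (q*w*p)) 1 (q*u*p)) =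
      Φ ((β*(γ*(β*(β+γ)))) • (((q*w*p)*((p*xa*p)*(p*v*q)))*(q*u*p)) +
         (γ*(β*(β*(β+γ)))) • ((q*u*p)*((p*xa*p)*(p*v*q)*(q*w*p)))) := by
    intro u v w
    have h2 := push2R hΦ (key3 v w) (q*u*p)
    have gA : starTripleSum α1 α2 α3 α4 α5 α6
        ((β*(β*(β+γ))) • ((p*xa*p)*(p*v*q)*(q*w*p)) +
         (γ*(β*(β+γ))) • ((q*w*p)*((p*xa*p)*(p*v*q)))) 1 (q*u*p)
        = (β*(γ*(β*(β+γ)))) • (((q*w*p)*((p*xa*p)*(p*v*q)))*(q*u*p)) +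
          (γ*(β*(β*(β+γ)))) • ((q*u*p)*((p*xa*p)*(p*v*q)*(q*w*p))) := by
      rw [smid]
      simp only [mul_add, add_mul, smul_add, smul_smul, mul_smul_comm, smul_mul_assoc,
        mul_assoc, hpq', hqp', hpp', hqq', hpq, hqp, hpp, hqq,
        mul_zero, zero_mul, smul_zero, add_zero, zero_add]
      try module
    have gC : starTripleSum α1 α2 α3 α4 α5 α6
        ((β*(β*β)) • ((q*xc*p)*(p*v*q)*(q*w*p)) +
         (γ*(γ*β)) • ((q*w*p)*((p*v*q)*(q*xc*p)))) 1 (q*u*p) = 0 := by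
      rw [smid]
      simp [mul_add, add_mul, mul_smul_comm, smul_mul_assoc, mul_assoc,
        hpq', hqp', hpp', hqq']
    rw [h2, gA, gC, hΦ0, add_zero]
  have J3 : ∀ u v w : A,
      ((β+γ)*(β*(β*γ))) • ((q*w*p) * m * ((p*v*q)*(q*u*p))) +
      ((β+γ)*(β*(β*γ))) • ((q*u*p) * m * ((p*v*q)*(q*w*p))) = 0 := by
    intro u v w
    have EQ := hinj (chainJ3 u v w)
    have expand : ((β+γ)*(β*(β*γ))) • ((q*w*p) * m * ((p*v*q)*(q*u*p))) +
        ((β+γ)*(β*(β*γ))) • ((q*u*p) * m * ((p*v*q)*(q*w*p))) =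
        starTripleSum α1 α2 α3 α4 α5 α6
          (starTripleSum α1 α2 α3 α4 α5 α6
            (starTripleSum α1 α2 α3 α4 α5 α6
              (starTripleSum α1 α2 α3 α4 α5 α6 T 1 p) 1 (p*v*q)) 1 (q*w*p)) 1 (q*u*p) -
        ((β*(γ*(β*(β+γ)))) • (((q*w*p)*((p*xa*p)*(p*v*q)))*(q*u*p)) +
         (γ*(β*(β*(β+γ)))) • ((q*u*p)*((p*xa*p)*(p*v*q)*(q*w*p)))) := by
      simp only [smid, hmdef, mul_sub, sub_mul, mul_add, add_mul, smul_add, smul_sub,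
        smul_smul, mul_smul_comm, smul_mul_assoc, mul_assoc,
        hpq', hqp', hpp', hqq', hpq, hqp, hpp, hqq,
        mul_zero, zero_mul, smul_zero, add_zero, zero_add]
      try module
    rw [expand, EQ, sub_self]
  -- ===== combine =====
  have hsingle : ∀ u v : A, (q*u*p) * m * ((p*v*q)*(q*u*p)) = 0 := by
    intro u v
    have j1 := J1 u v u
    have j2 := J2 u v u
    have j3 := J3 u v u
    rw [← add_smul] at j1 j2 j3
    by_cases hβ0 : β = 0
    · have hγ0 : γ ≠ 0 := fun h => hα (by rw [hβ0, h, add_zero])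
      refine smul_cancel ?_ j2
      rw [hβ0]
      have : ((0:ℂ)+γ)*(γ*(0*0)) + ((0:ℂ)+γ)*(γ*(γ*γ)) = γ^4 := by ring
      rw [this]
      exact pow_ne_zero 4 hγ0
    · by_cases hγ0 : γ = 0
      · refine smul_cancel ?_ j1
        rw [hγ0]
        have : (β+0)*(β*(β*β)) + (β+0)*(β*(0*0)) = β^4 := by ring
        rw [this]
        exact pow_ne_zero 4 hβ0
      · by_cases hbg : β*β + γ*γ = 0
        · refine smul_cancel ?_ j3
          have : ((β+γ)*(β*(β*γ))) + ((β+γ)*(β*(β*γ))) = 2*((β+γ)*(β*(β*γ))) := by ring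
          rw [this]
          exact mul_ne_zero two_ne_zero
            (mul_ne_zero hα (mul_ne_zero hβ0 (mul_ne_zero hβ0 hγ0)))
        · refine smul_cancel ?_ j1
          have : ((β+γ)*(β*(β*β))) + ((β+γ)*(β*(γ*γ))) = (β+γ)*β*(β*β+γ*γ) := by ring
          rw [this]
          exact mul_ne_zero (mul_ne_zero hα hβ0) hbg
  have hmp : m * p = m := by
    rw [hmdef]; simp [sub_mul, mul_assoc, hpp', hpp]
  have hpm : p * m = m := by
    rw [hmdef]; simp [mul_sub, mul_assoc, hpp', hpp]
  have hsm : ∀ u : A, (q*u*p) * m = 0 := by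
    intro u
    have hv : ∀ v : A, ((q*u*p)*m)*v*(q*u*p) = 0 := by
      intro v
      have e : ((q*u*p)*m)*v*(q*u*p) = (q*u*p)*m*((p*v*q)*(q*u*p)) := by
        conv_lhs => rw [← hmp]
        simp [mul_assoc, hqq', hqq]
      rw [e]
      exact hsingle u v
    rcases hprime _ _ hv with h | h
    · exact h
    · rw [h, zero_mul]
  have hqm : ∀ t : A, q * t * m = 0 := by
    intro t
    have h1 : q*t*m = (q*t*p)*m := by
      conv_lhs => rw [← hpm]
      rw [← mul_assoc]
    rw [h1]; exact hsm t
  rcases hprime q m hqm with h | h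
  · exact absurd h hq0
  · rw [hmdef] at h
    exact sub_eq_zero.mp h

end CornerDiag

section MainCore

variable {A B : Type*} [Ring A] [Algebra ℂ A] [StarRing A]
    [Ring B] [Algebra ℂ B] [StarRing B]
variable {α1 α2 α3 α4 α5 α6 : ℂ} {Φ : A → B}

lemma main_core
    (hsum : α1 + α2 + α3 + α4 + α5 + α6 ≠ 0)
    (hprime : ∀ x y : A, (∀ t : A, x * t * y = 0) → x = 0 ∨ y = 0)
    (hbij : Function.Bijective Φ)
    (hΦ : ∀ a b c : A, Φ (starTripleSum α1 α2 α3 α4 α5 α6 a b c) =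
      starTripleSum α1 α2 α3 α4 α5 α6 (Φ a) (Φ b) (Φ c))
    (p q : A) (hpp : p * p = p) (hqq : q * q = q) (hpq : p * q = 0) (hqp : q * p = 0)
    (hpq1 : p + q = 1) (hp0 : p ≠ 0) (hq0 : q ≠ 0)
    (a b c d : A) (ha : ∃ x : A, a = p * x * p) (hb : ∃ x : A, b = p * x * q)
    (hc : ∃ x : A, c = q * x * p) (hd : ∃ x : A, d = q * x * q) :
    Φ (a + b + c + d) = Φ a + Φ b + Φ c + Φ d := by
  obtain ⟨xa, rfl⟩ := ha
  obtain ⟨xb, rfl⟩ := hb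
  obtain ⟨xc, rfl⟩ := hc
  obtain ⟨xd, rfl⟩ := hd
  obtain ⟨T, hT⟩ := hbij.2 (Φ (p*xa*p) + Φ (p*xb*q) + Φ (q*xc*p) + Φ (q*xd*q))
  have hTsym : Φ T = Φ (q*xd*q) + Φ (q*xc*p) + Φ (p*xb*q) + Φ (p*xa*p) := by
    rw [hT]; abel
  have h12 : p*T*q = p*xb*q :=
    corner_off hsum hprime hbij hΦ p q hpp hqq hpq hqp hp0 hq0 T xa xb xc xd hT
  have h21 : q*T*p = q*xc*p :=
    corner_off hsum hprime hbij hΦ q p hqq hpp hqp hpq hq0 hp0 T xd xc xb xa hTsym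
  have h11 : p*T*p = p*xa*p :=
    corner_diag hsum hprime hbij hΦ p q hpp hqq hpq hqp hp0 hq0 T xa xb xc xd hT
  have h22 : q*T*q = q*xd*q :=
    corner_diag hsum hprime hbij hΦ q p hqq hpp hqp hpq hq0 hp0 T xd xc xb xa hTsym
  have hTsum : T = p*xa*p + p*xb*q + q*xc*p + q*xd*q := by
    have e : T = p*T*p + p*T*q + q*T*p + q*T*q := by
      calc T = (p+q)*T*(p+q) := by rw [hpq1, one_mul, mul_one]
        _ = p*T*p + p*T*q + q*T*p + q*T*q := by
            simp only [add_mul, mul_add]; abel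
    rw [e, h11, h12, h21, h22]
  rw [← hTsum]
  exact hT

end MainCore
end Stmt7Aux


theorem stmt7 {A B : Type*} [Ring A] [Algebra ℂ A] [StarRing A]
    [Ring B] [Algebra ℂ B] [StarRing B]
    (α1 α2 α3 α4 α5 α6 : ℂ)
    (hsum : α1 + α2 + α3 + α4 + α5 + α6 ≠ 0)
    (hprime : ∀ x y : A, (∀ t : A, x * t * y = 0) → x = 0 ∨ y = 0)
    (e : A) (hestar : star e = e) (heidem : e * e = e) (he0 : e ≠ 0) (he1 : e ≠ 1)
    (Φ : A → B) (hbij : Function.Bijective Φ)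
    (hΦ : ∀ a b c : A, Φ (starTripleSum α1 α2 α3 α4 α5 α6 a b c) =
      starTripleSum α1 α2 α3 α4 α5 α6 (Φ a) (Φ b) (Φ c))
    (q r : A) (hqr : (q = e ∧ r = 1 - e) ∨ (q = 1 - e ∧ r = e))
    (a b c d : A) (ha : ∃ x : A, a = q * x * q) (hb : ∃ x : A, b = q * x * r)
    (hc : ∃ x : A, c = r * x * q) (hd : ∃ x : A, d = r * x * r) :
    Φ (a + b + c + d) = Φ a + Φ b + Φ c + Φ d := by
  have hee : (1-e) * (1-e) = 1-e := by
    have h : (1-e) * (1-e) = 1 - e - e + e*e := by noncomm_ring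
    rw [h, heidem]; abel
  have he1e : e * (1-e) = 0 := by
    rw [mul_sub, mul_one, heidem, sub_self]
  have h1ee : (1-e) * e = 0 := by
    rw [sub_mul, one_mul, heidem, sub_self]
  have h1e0 : (1:A) - e ≠ 0 := sub_ne_zero.mpr (Ne.symm he1)
  rcases hqr with ⟨hq, hr⟩ | ⟨hq, hr⟩
  · simp only [hq, hr] at ha hb hc hd
    exact Stmt7Aux.main_core hsum hprime hbij hΦ e (1-e) heidem hee he1e h1ee
      (by abel) he0 h1e0 a b c d ha hb hc hd
  · simp only [hq, hr] at ha hb hc hd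
    exact Stmt7Aux.main_core hsum hprime hbij hΦ (1-e) e hee heidem h1ee he1e
      (by abel) h1e0 he0 a b c d ha hb hc hd
end

section
/- Let A and B be unital complex *-algebras with A prime and possessing a nontrivial projection, α₁,...,α₆ ∈ ℂ with ∑αₖ ≠ 0, and let Φ : A → B be a bijection preserving the sum of triple products α₁ab*c + α₂acb* + α₃b*ac + α₄cab* + α₅b*ca + α₆cb*a. If Φ(1_A) is a projection of B, then Φ(1_A) = 1_B. -/
theorem stmt9 {A B : Type*} [Ring A] [Algebra ℂ A] [StarRing A]
    [Ring B] [Algebra ℂ B] [StarRing B]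
    (α1 α2 α3 α4 α5 α6 : ℂ)
    (hsum : α1 + α2 + α3 + α4 + α5 + α6 ≠ 0)
    (hprime : ∀ x y : A, (∀ t : A, x * t * y = 0) → x = 0 ∨ y = 0)
    (e : A) (hestar : star e = e) (heidem : e * e = e) (he0 : e ≠ 0) (he1 : e ≠ 1)
    (Φ : A → B) (hbij : Function.Bijective Φ)
    (hΦ : ∀ a b c : A, Φ (starTripleSum α1 α2 α3 α4 α5 α6 a b c) =
      starTripleSum α1 α2 α3 α4 α5 α6 (Φ a) (Φ b) (Φ c))
    (hp1 : star (Φ 1) = Φ 1) (hp2 : Φ 1 * Φ 1 = Φ 1) :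
    Φ 1 = 1 := by
  obtain ⟨z, hz⟩ := hbij.surjective 1
  set s : ℂ := α1 + α2 + α3 + α4 + α5 + α6 with hs
  have h1 := hΦ 1 1 1
  have h2 := hΦ z 1 1
  have e1 : starTripleSum α1 α2 α3 α4 α5 α6 (1 : A) 1 1 = s • 1 := by
    simp [starTripleSum, hs, add_smul]
  have e2 : starTripleSum α1 α2 α3 α4 α5 α6 z (1 : A) 1 = s • z := by
    simp [starTripleSum, hs, add_smul]
  have e3 : starTripleSum α1 α2 α3 α4 α5 α6 (Φ 1) (Φ 1) (Φ 1) = s • (Φ 1) := by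
    simp [starTripleSum, hp1, hp2, hs, add_smul]
  have e4 : starTripleSum α1 α2 α3 α4 α5 α6 (Φ z) (Φ 1) (Φ 1) = s • (Φ 1) := by
    simp [starTripleSum, hz, hp1, hp2, hs, add_smul]
  rw [e1, e3] at h1
  rw [e2, e4] at h2
  have hz1 : z = 1 := by
    have := hbij.injective (h2.trans h1.symm)
    calc z = s⁻¹ • (s • z) := (inv_smul_smul₀ hsum z).symm
    _ = s⁻¹ • (s • (1 : A)) := by rw [this]
    _ = 1 := inv_smul_smul₀ hsum 1
  rw [← hz, hz1]
end

section
/- Let A and B be unital complex *-algebras with A prime and possessing a nontrivial projection, α₁,...,α₆ ∈ ℂ with s := ∑αₖ ≠ 0, and Φ : A → B a bijection preserving the sum of triple products α₁ab*c + α₂acb* + α₃b*ac + α₄cab* + α₅b*ca + α₆cb*a, with Φ(1_A) a projection. Then Φ(s·a) = s·Φ(a) for all a ∈ A, and Φ(b*) = Φ(b)* for all b ∈ A. -/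
theorem stmt10 {A B : Type*} [Ring A] [Algebra ℂ A] [StarRing A]
    [Ring B] [Algebra ℂ B] [StarRing B]
    (α1 α2 α3 α4 α5 α6 : ℂ)
    (hsum : α1 + α2 + α3 + α4 + α5 + α6 ≠ 0)
    (hprime : ∀ x y : A, (∀ t : A, x * t * y = 0) → x = 0 ∨ y = 0)
    (e : A) (hestar : star e = e) (heidem : e * e = e) (he0 : e ≠ 0) (he1 : e ≠ 1)
    (Φ : A → B) (hbij : Function.Bijective Φ)
    (hΦ : ∀ a b c : A, Φ (starTripleSum α1 α2 α3 α4 α5 α6 a b c) =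
      starTripleSum α1 α2 α3 α4 α5 α6 (Φ a) (Φ b) (Φ c))
    (hp1 : star (Φ 1) = Φ 1) (hp2 : Φ 1 * Φ 1 = Φ 1) :
    (∀ a : A, Φ ((α1 + α2 + α3 + α4 + α5 + α6) • a) =
      (α1 + α2 + α3 + α4 + α5 + α6) • Φ a) ∧
    (∀ b : A, Φ (star b) = star (Φ b)) := by
  set s : ℂ := α1 + α2 + α3 + α4 + α5 + α6 with hs
  have key : ∀ x : A, starTripleSum α1 α2 α3 α4 α5 α6 x 1 1 = s • x := by
    intro x
    simp [starTripleSum, hs, add_smul]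
  have keyB : ∀ b : A, starTripleSum α1 α2 α3 α4 α5 α6 1 b 1 = s • star b := by
    intro b
    simp [starTripleSum, hs, add_smul]
  have hcancelA : ∀ x y : A, s • x = s • y → x = y := by
    intro x y h
    have h2 := congrArg (fun z => s⁻¹ • z) h
    simpa [smul_smul, inv_mul_cancel₀ hsum] using h2
  have hcancelB : ∀ x y : B, s • x = s • y → x = y := by
    intro x y h
    have h2 := congrArg (fun z => s⁻¹ • z) h
    simpa [smul_smul, inv_mul_cancel₀ hsum] using h2
  -- Φ 1 = 1
  obtain ⟨a, ha⟩ := hbij.2 1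
  have h1 := hΦ a 1 1
  have h2 := hΦ (1 : A) 1 1
  rw [key] at h1 h2
  rw [ha] at h1
  have e1 : starTripleSum α1 α2 α3 α4 α5 α6 (1 : B) (Φ 1) (Φ 1) = s • Φ 1 := by
    simp [starTripleSum, hp1, hp2, hs, add_smul]
  have e2 : starTripleSum α1 α2 α3 α4 α5 α6 (Φ 1) (Φ 1) (Φ 1) = s • Φ 1 := by
    simp [starTripleSum, hp1, hp2, hs, add_smul, mul_assoc]
  rw [e1] at h1
  rw [e2] at h2
  have ha1 : a = 1 := hcancelA _ _ (hbij.1 (h1.trans h2.symm))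
  have hp : Φ 1 = 1 := by rw [← ha1, ha]
  have part1 : ∀ a : A, Φ (s • a) = s • Φ a := by
    intro a
    have h := hΦ a 1 1
    rw [key] at h
    rw [h, hp]
    simp [starTripleSum, hs, add_smul]
  refine ⟨part1, fun b => ?_⟩
  have h := hΦ 1 b 1
  rw [keyB, hp, part1 (star b)] at h
  have eB : starTripleSum α1 α2 α3 α4 α5 α6 (1 : B) (Φ b) (1 : B) = s • star (Φ b) := by
    simp [starTripleSum, hs, add_smul]
  rw [eB] at h
  exact hcancelB _ _ h
end

section
/- Let A and B be unital complex *-algebras with A prime and possessing a nontrivial projection, α₁,...,α₆ ∈ ℂ with ∑αₖ ≠ 0, and Φ : A → B a bijection preserving the sum of triple products α₁ab*c + α₂acb* + α₃b*ac + α₄cab* + α₅b*ca + α₆cb*a, with Φ(1_A) a projection. Then Φ(ac + ca) = Φ(a)Φ(c) + Φ(c)Φ(a) for all a, c ∈ A; together with Φ(b*) = Φ(b)*, Φ is a *-Jordan ring isomorphism. -/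
private lemma liftL {R : Type*} [Ring R] {x y z : R} (h : x * y = z) :
    ∀ w : R, x * (y * w) = z * w := fun w => by rw [← mul_assoc, h]

set_option maxHeartbeats 3200000 in
theorem stmt11 {A B : Type*} [Ring A] [Algebra ℂ A] [StarRing A]
    [Ring B] [Algebra ℂ B] [StarRing B]
    (α1 α2 α3 α4 α5 α6 : ℂ)
    (hsum : α1 + α2 + α3 + α4 + α5 + α6 ≠ 0)
    (hprime : ∀ x y : A, (∀ t : A, x * t * y = 0) → x = 0 ∨ y = 0)
    (e : A) (hestar : star e = e) (heidem : e * e = e) (he0 : e ≠ 0) (he1 : e ≠ 1)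
    (Φ : A → B) (hbij : Function.Bijective Φ)
    (hΦ : ∀ a b c : A, Φ (starTripleSum α1 α2 α3 α4 α5 α6 a b c) =
      starTripleSum α1 α2 α3 α4 α5 α6 (Φ a) (Φ b) (Φ c))
    (hp1 : star (Φ 1) = Φ 1) (hp2 : Φ 1 * Φ 1 = Φ 1) :
    (∀ a c : A, Φ (a * c + c * a) = Φ a * Φ c + Φ c * Φ a) ∧
    (∀ a b : A, Φ (a + b) = Φ a + Φ b) ∧
    (∀ b : A, Φ (star b) = star (Φ b)) := by
  obtain ⟨hinj, hsurj⟩ := hbij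
  set S : ℂ := α1 + α2 + α3 + α4 + α5 + α6 with hS
  -- scalar cancellation
  have cA : ∀ (c : ℂ), c ≠ 0 → ∀ u v : A, c • u = c • v → u = v := by
    intro c hc u v h
    have h2 := congrArg (fun w => c⁻¹ • w) h
    simpa [smul_smul, inv_mul_cancel₀ hc] using h2
  have cB : ∀ (c : ℂ), c ≠ 0 → ∀ u v : B, c • u = c • v → u = v := by
    intro c hc u v h
    have h2 := congrArg (fun w => c⁻¹ • w) h
    simpa [smul_smul, inv_mul_cancel₀ hc] using h2
  -- Φ 0 = 0
  have h0 : Φ 0 = 0 := by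
    obtain ⟨c0, hc0⟩ := hsurj 0
    have h := hΦ 0 1 c0
    rw [show starTripleSum α1 α2 α3 α4 α5 α6 (0:A) 1 c0 = 0 by
      simp [starTripleSum]] at h
    rw [h, hc0]
    simp [starTripleSum]
  -- Φ 1 = 1
  have hG : ∀ a : A, Φ (S • a) =
      (α1+α2) • (Φ a * Φ 1) + (α3+α4) • (Φ 1 * Φ a * Φ 1) + (α5+α6) • (Φ 1 * Φ a) := by
    intro a
    have h := hΦ a 1 1
    rw [show starTripleSum α1 α2 α3 α4 α5 α6 a 1 1 = S • a by
      simp only [starTripleSum, star_one, mul_one, one_mul, hS]; module] at h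
    rw [h]
    simp only [starTripleSum, hp1]
    rw [show Φ a * Φ 1 * Φ 1 = Φ a * Φ 1 by rw [mul_assoc, hp2]]
    rw [show Φ 1 * Φ 1 * Φ a = Φ 1 * Φ a by rw [hp2]]
    module
  have hone : Φ 1 = 1 := by
    have key : ∀ y : B,
        (α1+α2) • (y * Φ 1) + (α3+α4) • (Φ 1 * y * Φ 1) + (α5+α6) • (Φ 1 * y) = 0 → y = 0 := by
      intro y hy
      obtain ⟨a, rfl⟩ := hsurj y
      rw [← hG] at hy
      have h2 : S • a = 0 := hinj (by rw [hy, h0])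
      rcases smul_eq_zero.mp h2 with h | h
      · exact absurd h hsum
      · rw [h, h0]
    have hz : ∀ z : B, (1 - Φ 1) * z * (1 - Φ 1) = 0 := by
      intro z
      apply key
      have hq : (1 - Φ 1) * Φ 1 = 0 := by rw [sub_mul, one_mul, hp2, sub_self]
      have hq' : Φ 1 * (1 - Φ 1) = 0 := by rw [mul_sub, mul_one, hp2, sub_self]
      have e1 : (1 - Φ 1) * z * (1 - Φ 1) * Φ 1 = 0 := by
        rw [mul_assoc ((1 - Φ 1) * z), hq, mul_zero]
      have e2 : Φ 1 * ((1 - Φ 1) * z * (1 - Φ 1)) = 0 := by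
        rw [← mul_assoc, ← mul_assoc, hq', zero_mul, zero_mul]
      rw [e1, e2]
      simp
    have h12 : ((1:B) - Φ 1) * (1 - Φ 1) = 1 - Φ 1 := by
      rw [sub_mul, one_mul, mul_sub, mul_one, hp2]; abel
    have := hz 1
    rw [mul_one, h12] at this
    have h1 : (1:B) = Φ 1 := sub_eq_zero.mp this
    exact h1.symm
  have homog : ∀ a : A, Φ (S • a) = S • Φ a := by
    intro a
    rw [hG a, hone]
    simp only [mul_one, one_mul]
    rw [hS]; module
  have hstar : ∀ b : A, Φ (star b) = star (Φ b) := by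
    intro b
    have h := hΦ 1 b 1
    rw [show starTripleSum α1 α2 α3 α4 α5 α6 (1:A) b 1 = S • (star b) by
      simp only [starTripleSum, mul_one, one_mul, hS]; module] at h
    rw [show starTripleSum α1 α2 α3 α4 α5 α6 (Φ 1) (Φ b) (Φ 1) = S • (star (Φ b)) by
      rw [hone]; simp only [starTripleSum, mul_one, one_mul, hS]; module] at h
    rw [homog] at h
    exact cB S hsum _ _ h
  have ID1 : ∀ a c : A, Φ ((α1+α2+α3) • (a*c) + (α4+α5+α6) • (c*a)) =
      (α1+α2+α3) • (Φ a * Φ c) + (α4+α5+α6) • (Φ c * Φ a) := by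
    intro a c
    have h := hΦ a 1 c
    rw [show starTripleSum α1 α2 α3 α4 α5 α6 a 1 c =
        (α1+α2+α3) • (a*c) + (α4+α5+α6) • (c*a) by
      simp only [starTripleSum, star_one, mul_one, one_mul]; module] at h
    rw [h, hone]
    simp only [starTripleSum, star_one, mul_one, one_mul]; module
  obtain ⟨θ, φ, hθ0, hθφ, hP⟩ : ∃ θ φ : ℂ, θ ≠ 0 ∧ θ + φ = S ∧
      ∀ a c : A, Φ (θ • (a*c) + φ • (c*a)) = θ • (Φ a * Φ c) + φ • (Φ c * Φ a) := by
    by_cases hl : (α1+α2+α3) = 0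
    · refine ⟨α4+α5+α6, α1+α2+α3, ?_, by rw [hS]; ring, fun a c => ?_⟩
      · intro h; apply hsum; rw [hS]
        linear_combination hl + h
      · have h := ID1 c a
        rw [add_comm ((α1+α2+α3) • (c*a)) ((α4+α5+α6) • (a*c)),
          add_comm ((α1+α2+α3) • (Φ c * Φ a)) ((α4+α5+α6) • (Φ a * Φ c))] at h
        exact h
    · exact ⟨_, _, hl, by rw [hS]; ring, ID1⟩
  -- Peirce setting
  set f : A := 1 - e with hfdef
  have hf0 : f ≠ 0 := by
    rw [hfdef]; intro h; exact he1 (sub_eq_zero.mp h).symm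
  have hee : e * e = e := heidem
  have hef : e * f = 0 := by rw [hfdef, mul_sub, mul_one, heidem, sub_self]
  have hfe : f * e = 0 := by rw [hfdef, sub_mul, one_mul, heidem, sub_self]
  have hff : f * f = f := by
    rw [hfdef, sub_mul, one_mul, mul_sub, mul_one, heidem]; abel
  have prime_rf : ∀ d : A, (∀ c : A, d * c * f = 0) → d = 0 :=
    fun d h => (hprime d f h).resolve_right hf0
  have prime_re : ∀ d : A, (∀ c : A, d * c * e = 0) → d = 0 :=
    fun d h => (hprime d e h).resolve_right he0
  have prime_le : ∀ d : A, (∀ c : A, e * c * d = 0) → d = 0 :=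
    fun d h => (hprime e d h).resolve_left he0
  have prime_lf : ∀ d : A, (∀ c : A, f * c * d = 0) → d = 0 :=
    fun d h => (hprime f d h).resolve_left hf0
  have hdecomp : ∀ t : A, t = e*(t*e) + e*(t*f) + (f*(t*e) + f*(t*f)) := by
    intro t; rw [hfdef]; noncomm_ring
  have mk11 : ∀ a : A, e*a*e = a → e*a = a ∧ a*e = a ∧ f*a = 0 ∧ a*f = 0 := by
    intro a ha
    have h1 : e*a = a := by
      conv_lhs => rw [← ha]
      rw [← mul_assoc, ← mul_assoc, heidem, ha]
    have h2 : a*e = a := by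
      conv_lhs => rw [← ha]
      rw [mul_assoc, heidem, ha]
    refine ⟨h1, h2, ?_, ?_⟩
    · rw [hfdef, sub_mul, one_mul, h1, sub_self]
    · rw [hfdef, mul_sub, mul_one, h2, sub_self]
  have mk12 : ∀ a : A, e*a*f = a → e*a = a ∧ a*f = a ∧ a*e = 0 ∧ f*a = 0 := by
    intro a ha
    refine ⟨?_, ?_, ?_, ?_⟩
    · conv_lhs => rw [← ha]
      rw [← mul_assoc, ← mul_assoc, heidem, ha]
    · conv_lhs => rw [← ha]
      rw [mul_assoc, hff, ha]
    · conv_lhs => rw [← ha]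
      rw [mul_assoc, hfe, mul_zero]
    · conv_lhs => rw [← ha]
      rw [← mul_assoc, ← mul_assoc, hfe, zero_mul, zero_mul]
  have mk21 : ∀ a : A, f*a*e = a → f*a = a ∧ a*e = a ∧ e*a = 0 ∧ a*f = 0 := by
    intro a ha
    refine ⟨?_, ?_, ?_, ?_⟩
    · conv_lhs => rw [← ha]
      rw [← mul_assoc, ← mul_assoc, hff, ha]
    · conv_lhs => rw [← ha]
      rw [mul_assoc, heidem, ha]
    · conv_lhs => rw [← ha]
      rw [← mul_assoc, ← mul_assoc, hef, zero_mul, zero_mul]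
    · conv_lhs => rw [← ha]
      rw [mul_assoc, hef, mul_zero]
  have mk22 : ∀ a : A, f*a*f = a → f*a = a ∧ a*f = a ∧ e*a = 0 ∧ a*e = 0 := by
    intro a ha
    refine ⟨?_, ?_, ?_, ?_⟩
    · conv_lhs => rw [← ha]
      rw [← mul_assoc, ← mul_assoc, hff, ha]
    · conv_lhs => rw [← ha]
      rw [mul_assoc, hff, ha]
    · conv_lhs => rw [← ha]
      rw [← mul_assoc, ← mul_assoc, hef, zero_mul, zero_mul]
    · conv_lhs => rw [← ha]
      rw [mul_assoc, hfe, mul_zero]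
  -- additivity transfer along the pair product
  have padd_l : ∀ x y z c : A, Φ z = Φ x + Φ y →
      Φ (θ•(c*z) + φ•(z*c)) = Φ (θ•(c*x) + φ•(x*c)) + Φ (θ•(c*y) + φ•(y*c)) := by
    intro x y z c hz
    rw [hP, hP, hP, hz, mul_add, add_mul, smul_add, smul_add]
    abel
  have padd_r : ∀ x y z c : A, Φ z = Φ x + Φ y →
      Φ (θ•(z*c) + φ•(c*z)) = Φ (θ•(x*c) + φ•(c*x)) + Φ (θ•(y*c) + φ•(c*y)) := by
    intro x y z c hz
    rw [hP, hP, hP, hz, mul_add, add_mul, smul_add, smul_add]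
    abel
  have coll_l : ∀ x y z c : A, Φ z = Φ x + Φ y → θ•(c*y) + φ•(y*c) = 0 →
      θ•(c*z) + φ•(z*c) = θ•(c*x) + φ•(x*c) := by
    intro x y z c hz hy
    apply hinj
    rw [padd_l x y z c hz, hy, h0, add_zero]
  have coll_r : ∀ x y z c : A, Φ z = Φ x + Φ y → θ•(y*c) + φ•(c*y) = 0 →
      θ•(z*c) + φ•(c*z) = θ•(x*c) + φ•(c*x) := by
    intro x y z c hz hy
    apply hinj
    rw [padd_r x y z c hz, hy, h0, add_zero]
  -- ROW A lemma : a ∈ A11, b ∈ A12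
  have rowA : ∀ a b : A, e*a*e = a → e*b*f = b → Φ (a + b) = Φ a + Φ b := by
    intro a b ha hb
    obtain ⟨hea, hae, hfa, haf⟩ := mk11 a ha
    obtain ⟨heb, hbf, hbe, hfb⟩ := mk12 b hb
    obtain ⟨t, ht⟩ := hsurj (Φ a + Φ b)
    suffices hts : t = a + b by rw [← hts, ht]
    have htswap : Φ t = Φ b + Φ a := by rw [ht]; abel
    have h1 : θ•(f*t) + φ•(t*f) = θ•(f*b) + φ•(b*f) :=
      coll_l b a t f htswap (by rw [hfa, haf, smul_zero, smul_zero, add_zero])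
    have h21 : f*(t*e) = 0 := by
      have H := congrArg (fun z => f * z * e) h1
      simp only [mul_add, add_mul, smul_add, mul_smul_comm, smul_mul_assoc, mul_assoc,
        mul_zero, zero_mul, smul_zero, add_zero, zero_add, mul_one, one_mul,
        hee, hef, hfe, hff, hea, hae, hfa, haf, heb, hbf, hbe, hfb,
        liftL hee, liftL hef, liftL hfe, liftL hff,
        liftL hea, liftL hae, liftL hfa, liftL haf,
        liftL heb, liftL hbf, liftL hbe, liftL hfb] at H
      exact (smul_eq_zero.mp H).resolve_left hθ0
    have h22 : f*(t*f) = 0 := by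
      have H := congrArg (fun z => f * z * f) h1
      simp only [mul_add, add_mul, smul_add, mul_smul_comm, smul_mul_assoc, mul_assoc,
        mul_zero, zero_mul, smul_zero, add_zero, zero_add, mul_one, one_mul,
        hee, hef, hfe, hff, hea, hae, hfa, haf, heb, hbf, hbe, hfb,
        liftL hee, liftL hef, liftL hfe, liftL hff,
        liftL hea, liftL hae, liftL hfa, liftL haf,
        liftL heb, liftL hbf, liftL hbe, liftL hfb] at H
      rw [← add_smul, hθφ] at H
      exact (smul_eq_zero.mp H).resolve_left hsum
    have h2 : θ•(t*f) + φ•(f*t) = θ•(b*f) + φ•(f*b) :=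
      coll_r b a t f htswap (by rw [haf, hfa, smul_zero, smul_zero, add_zero])
    have h12 : e*(t*f) = b := by
      have H := congrArg (fun z => e * z * f) h2
      simp only [mul_add, add_mul, smul_add, mul_smul_comm, smul_mul_assoc, mul_assoc,
        mul_zero, zero_mul, smul_zero, add_zero, zero_add, mul_one, one_mul,
        hee, hef, hfe, hff, hea, hae, hfa, haf, heb, hbf, hbe, hfb,
        liftL hee, liftL hef, liftL hfe, liftL hff,
        liftL hea, liftL hae, liftL hfa, liftL haf,
        liftL heb, liftL hbf, liftL hbe, liftL hfb] at H
      exact cA θ hθ0 _ _ H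
    have h11 : e*(t*e) = a := by
      have key : ∀ c : A, (e*(t*e) - a) * c * f = 0 := by
        intro c
        have h3 : θ•(t*(e*c*f)) + φ•((e*c*f)*t) = θ•(a*(e*c*f)) + φ•((e*c*f)*a) := by
          apply coll_r a b t (e*c*f) ht
          simp only [mul_assoc, hfb, liftL hbe, zero_mul, mul_zero, smul_zero, add_zero]
        have H := congrArg (fun z => e * z * f) h3
        simp only [mul_add, add_mul, smul_add, mul_smul_comm, smul_mul_assoc, mul_assoc,
          mul_zero, zero_mul, smul_zero, add_zero, zero_add, mul_one, one_mul,
          hee, hef, hfe, hff, hea, hae, hfa, haf, heb, hbf, hbe, hfb, h22,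
          liftL hee, liftL hef, liftL hfe, liftL hff,
          liftL hea, liftL hae, liftL hfa, liftL haf,
          liftL heb, liftL hbf, liftL hbe, liftL hfb, liftL h22] at H
        have H2 := cA θ hθ0 _ _ H
        rw [sub_mul, sub_mul]
        rw [show e*(t*e)*c*f = e*(t*(e*(c*f))) by simp only [mul_assoc]]
        rw [show a*c*f = a*(c*f) by simp only [mul_assoc]]
        rw [H2, sub_self]
      have hz := prime_rf _ key
      have := sub_eq_zero.mp hz
      exact this
    rw [hdecomp t, h11, h12, h21, h22]
    abel
  -- COL : a in A11, b in A21
  have col : ∀ a b : A, e*a*e = a → f*b*e = b → Φ (a + b) = Φ a + Φ b := by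
    intro a b ha hb
    obtain ⟨hea, hae, hfa, haf⟩ := mk11 a ha
    obtain ⟨hfb, hbe, heb, hbf⟩ := mk21 b hb
    obtain ⟨t, ht⟩ := hsurj (Φ a + Φ b)
    suffices hts : t = a + b by rw [← hts, ht]
    have htswap : Φ t = Φ b + Φ a := by rw [ht]; abel
    have h1 : θ•(t*f) + φ•(f*t) = θ•(b*f) + φ•(f*b) :=
      coll_r b a t f htswap (by rw [haf, hfa, smul_zero, smul_zero, add_zero])
    have h12 : e*(t*f) = 0 := by
      have H := congrArg (fun z => e * z * f) h1
      simp only [mul_add, add_mul, smul_add, mul_smul_comm, smul_mul_assoc, mul_assoc,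
        mul_zero, zero_mul, smul_zero, add_zero, zero_add, mul_one, one_mul,
        hee, hef, hfe, hff, liftL hee, liftL hef, liftL hfe, liftL hff, hea, hae, hfa, haf, hfb, hbe, heb, hbf,
        liftL hea, liftL hae, liftL hfa, liftL haf,
        liftL hfb, liftL hbe, liftL heb, liftL hbf] at H
      exact (smul_eq_zero.mp H).resolve_left hθ0
    have h22 : f*(t*f) = 0 := by
      have H := congrArg (fun z => f * z * f) h1
      simp only [mul_add, add_mul, smul_add, mul_smul_comm, smul_mul_assoc, mul_assoc,
        mul_zero, zero_mul, smul_zero, add_zero, zero_add, mul_one, one_mul,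
        hee, hef, hfe, hff, liftL hee, liftL hef, liftL hfe, liftL hff, hea, hae, hfa, haf, hfb, hbe, heb, hbf,
        liftL hea, liftL hae, liftL hfa, liftL haf,
        liftL hfb, liftL hbe, liftL heb, liftL hbf] at H
      rw [← add_smul, hθφ] at H
      exact (smul_eq_zero.mp H).resolve_left hsum
    have h2 : θ•(f*t) + φ•(t*f) = θ•(f*b) + φ•(b*f) :=
      coll_l b a t f htswap (by rw [hfa, haf, smul_zero, smul_zero, add_zero])
    have h21 : f*(t*e) = b := by
      have H := congrArg (fun z => f * z * e) h2
      simp only [mul_add, add_mul, smul_add, mul_smul_comm, smul_mul_assoc, mul_assoc,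
        mul_zero, zero_mul, smul_zero, add_zero, zero_add, mul_one, one_mul,
        hee, hef, hfe, hff, liftL hee, liftL hef, liftL hfe, liftL hff, hea, hae, hfa, haf, hfb, hbe, heb, hbf,
        liftL hea, liftL hae, liftL hfa, liftL haf,
        liftL hfb, liftL hbe, liftL heb, liftL hbf] at H
      exact cA θ hθ0 _ _ H
    have h22w : ∀ w : A, f*(t*(f*w)) = 0 := fun w => by
      rw [show f*(t*(f*w)) = f*(t*f)*w by simp only [mul_assoc], h22, zero_mul]
    have h11 : e*(t*e) = a := by
      have key : ∀ c : A, f * c * (e*(t*e) - a) = 0 := by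
        intro c
        have h3 : θ•((f*c*e)*t) + φ•(t*(f*c*e)) = θ•((f*c*e)*a) + φ•(a*(f*c*e)) := by
          apply coll_l a b t (f*c*e) ht
          simp only [mul_assoc, heb, liftL hbf, zero_mul, mul_zero, smul_zero, add_zero]
        have H := congrArg (fun z => f * z * e) h3
        simp only [mul_add, add_mul, smul_add, mul_smul_comm, smul_mul_assoc, mul_assoc,
        mul_zero, zero_mul, smul_zero, add_zero, zero_add, mul_one, one_mul,
        hee, hef, hfe, hff, liftL hee, liftL hef, liftL hfe, liftL hff, hea, hae, hfa, haf, hfb, hbe, heb, hbf,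
        liftL hea, liftL hae, liftL hfa, liftL haf,
        liftL hfb, liftL hbe, liftL heb, liftL hbf, h22, h22w] at H
        have H2 := cA θ hθ0 _ _ H
        rw [show f*c*(e*(t*e) - a) = f*(c*(e*(t*e))) - f*(c*a) by
          simp only [mul_sub, mul_assoc], H2, sub_self]
      have hz := prime_lf _ key
      exact sub_eq_zero.mp hz
    rw [hdecomp t, h11, h12, h21, h22]
    abel

  -- ROW2 : a in A22, b in A21
  have row2 : ∀ a b : A, f*a*f = a → f*b*e = b → Φ (a + b) = Φ a + Φ b := by
    intro a b ha hb
    obtain ⟨hfa, haf, hea, hae⟩ := mk22 a ha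
    obtain ⟨hfb, hbe, heb, hbf⟩ := mk21 b hb
    obtain ⟨t, ht⟩ := hsurj (Φ a + Φ b)
    suffices hts : t = a + b by rw [← hts, ht]
    have htswap : Φ t = Φ b + Φ a := by rw [ht]; abel
    have h1 : θ•(e*t) + φ•(t*e) = θ•(e*b) + φ•(b*e) :=
      coll_l b a t e htswap (by rw [hea, hae, smul_zero, smul_zero, add_zero])
    have h11 : e*(t*e) = 0 := by
      have H := congrArg (fun z => e * z * e) h1
      simp only [mul_add, add_mul, smul_add, mul_smul_comm, smul_mul_assoc, mul_assoc,
        mul_zero, zero_mul, smul_zero, add_zero, zero_add, mul_one, one_mul,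
        hee, hef, hfe, hff, liftL hee, liftL hef, liftL hfe, liftL hff, hfa, haf, hea, hae, hfb, hbe, heb, hbf,
        liftL hfa, liftL haf, liftL hea, liftL hae,
        liftL hfb, liftL hbe, liftL heb, liftL hbf] at H
      rw [← add_smul, hθφ] at H
      exact (smul_eq_zero.mp H).resolve_left hsum
    have h12 : e*(t*f) = 0 := by
      have H := congrArg (fun z => e * z * f) h1
      simp only [mul_add, add_mul, smul_add, mul_smul_comm, smul_mul_assoc, mul_assoc,
        mul_zero, zero_mul, smul_zero, add_zero, zero_add, mul_one, one_mul,
        hee, hef, hfe, hff, liftL hee, liftL hef, liftL hfe, liftL hff, hfa, haf, hea, hae, hfb, hbe, heb, hbf,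
        liftL hfa, liftL haf, liftL hea, liftL hae,
        liftL hfb, liftL hbe, liftL heb, liftL hbf] at H
      exact (smul_eq_zero.mp H).resolve_left hθ0
    have h2 : θ•(t*e) + φ•(e*t) = θ•(b*e) + φ•(e*b) :=
      coll_r b a t e htswap (by rw [hae, hea, smul_zero, smul_zero, add_zero])
    have h21 : f*(t*e) = b := by
      have H := congrArg (fun z => f * z * e) h2
      simp only [mul_add, add_mul, smul_add, mul_smul_comm, smul_mul_assoc, mul_assoc,
        mul_zero, zero_mul, smul_zero, add_zero, zero_add, mul_one, one_mul,
        hee, hef, hfe, hff, liftL hee, liftL hef, liftL hfe, liftL hff, hfa, haf, hea, hae, hfb, hbe, heb, hbf,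
        liftL hfa, liftL haf, liftL hea, liftL hae,
        liftL hfb, liftL hbe, liftL heb, liftL hbf] at H
      exact cA θ hθ0 _ _ H
    have h11w : ∀ w : A, e*(t*(e*w)) = 0 := fun w => by
      rw [show e*(t*(e*w)) = e*(t*e)*w by simp only [mul_assoc], h11, zero_mul]
    have h22 : f*(t*f) = a := by
      have key : ∀ c : A, (f*(t*f) - a) * c * e = 0 := by
        intro c
        have h3 : θ•(t*(f*c*e)) + φ•((f*c*e)*t) = θ•(a*(f*c*e)) + φ•((f*c*e)*a) := by
          apply coll_r a b t (f*c*e) ht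
          simp only [mul_assoc, heb, liftL hbf, zero_mul, mul_zero, smul_zero, add_zero]
        have H := congrArg (fun z => f * z * e) h3
        simp only [mul_add, add_mul, smul_add, mul_smul_comm, smul_mul_assoc, mul_assoc,
        mul_zero, zero_mul, smul_zero, add_zero, zero_add, mul_one, one_mul,
        hee, hef, hfe, hff, liftL hee, liftL hef, liftL hfe, liftL hff, hfa, haf, hea, hae, hfb, hbe, heb, hbf,
        liftL hfa, liftL haf, liftL hea, liftL hae,
        liftL hfb, liftL hbe, liftL heb, liftL hbf, h11, h11w] at H
        have H2 := cA θ hθ0 _ _ H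
        rw [show (f*(t*f) - a)*c*e = f*(t*(f*(c*e))) - a*(c*e) by
          simp only [sub_mul, mul_assoc], H2, sub_self]
      have hz := prime_re _ key
      exact sub_eq_zero.mp hz
    rw [hdecomp t, h11, h12, h21, h22]
    abel

  -- COL2 : a in A22, b in A12
  have col2 : ∀ a b : A, f*a*f = a → e*b*f = b → Φ (a + b) = Φ a + Φ b := by
    intro a b ha hb
    obtain ⟨hfa, haf, hea, hae⟩ := mk22 a ha
    obtain ⟨heb, hbf, hbe, hfb⟩ := mk12 b hb
    obtain ⟨t, ht⟩ := hsurj (Φ a + Φ b)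
    suffices hts : t = a + b by rw [← hts, ht]
    have htswap : Φ t = Φ b + Φ a := by rw [ht]; abel
    have h1 : θ•(t*e) + φ•(e*t) = θ•(b*e) + φ•(e*b) :=
      coll_r b a t e htswap (by rw [hae, hea, smul_zero, smul_zero, add_zero])
    have h11 : e*(t*e) = 0 := by
      have H := congrArg (fun z => e * z * e) h1
      simp only [mul_add, add_mul, smul_add, mul_smul_comm, smul_mul_assoc, mul_assoc,
        mul_zero, zero_mul, smul_zero, add_zero, zero_add, mul_one, one_mul,
        hee, hef, hfe, hff, liftL hee, liftL hef, liftL hfe, liftL hff, hfa, haf, hea, hae, heb, hbf, hbe, hfb,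
        liftL hfa, liftL haf, liftL hea, liftL hae,
        liftL heb, liftL hbf, liftL hbe, liftL hfb] at H
      rw [← add_smul, hθφ] at H
      exact (smul_eq_zero.mp H).resolve_left hsum
    have h21 : f*(t*e) = 0 := by
      have H := congrArg (fun z => f * z * e) h1
      simp only [mul_add, add_mul, smul_add, mul_smul_comm, smul_mul_assoc, mul_assoc,
        mul_zero, zero_mul, smul_zero, add_zero, zero_add, mul_one, one_mul,
        hee, hef, hfe, hff, liftL hee, liftL hef, liftL hfe, liftL hff, hfa, haf, hea, hae, heb, hbf, hbe, hfb,
        liftL hfa, liftL haf, liftL hea, liftL hae,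
        liftL heb, liftL hbf, liftL hbe, liftL hfb] at H
      exact (smul_eq_zero.mp H).resolve_left hθ0
    have h2 : θ•(e*t) + φ•(t*e) = θ•(e*b) + φ•(b*e) :=
      coll_l b a t e htswap (by rw [hea, hae, smul_zero, smul_zero, add_zero])
    have h12 : e*(t*f) = b := by
      have H := congrArg (fun z => e * z * f) h2
      simp only [mul_add, add_mul, smul_add, mul_smul_comm, smul_mul_assoc, mul_assoc,
        mul_zero, zero_mul, smul_zero, add_zero, zero_add, mul_one, one_mul,
        hee, hef, hfe, hff, liftL hee, liftL hef, liftL hfe, liftL hff, hfa, haf, hea, hae, heb, hbf, hbe, hfb,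
        liftL hfa, liftL haf, liftL hea, liftL hae,
        liftL heb, liftL hbf, liftL hbe, liftL hfb] at H
      exact cA θ hθ0 _ _ H
    have h11w : ∀ w : A, e*(t*(e*w)) = 0 := fun w => by
      rw [show e*(t*(e*w)) = e*(t*e)*w by simp only [mul_assoc], h11, zero_mul]
    have h22 : f*(t*f) = a := by
      have key : ∀ c : A, e * c * (f*(t*f) - a) = 0 := by
        intro c
        have h3 : θ•((e*c*f)*t) + φ•(t*(e*c*f)) = θ•((e*c*f)*a) + φ•(a*(e*c*f)) := by
          apply coll_l a b t (e*c*f) ht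
          simp only [mul_assoc, hfb, liftL hbe, zero_mul, mul_zero, smul_zero, add_zero]
        have H := congrArg (fun z => e * z * f) h3
        simp only [mul_add, add_mul, smul_add, mul_smul_comm, smul_mul_assoc, mul_assoc,
        mul_zero, zero_mul, smul_zero, add_zero, zero_add, mul_one, one_mul,
        hee, hef, hfe, hff, liftL hee, liftL hef, liftL hfe, liftL hff, hfa, haf, hea, hae, heb, hbf, hbe, hfb,
        liftL hfa, liftL haf, liftL hea, liftL hae,
        liftL heb, liftL hbf, liftL hbe, liftL hfb, h11, h11w] at H
        have H2 := cA θ hθ0 _ _ H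
        rw [show e*c*(f*(t*f) - a) = e*(c*(f*(t*f))) - e*(c*a) by
          simp only [mul_sub, mul_assoc], H2, sub_self]
      have hz := prime_le _ key
      exact sub_eq_zero.mp hz
    rw [hdecomp t, h11, h12, h21, h22]
    abel

  -- DIAG : a in A11, b in A22
  have diag : ∀ a b : A, e*a*e = a → f*b*f = b → Φ (a + b) = Φ a + Φ b := by
    intro a b ha hb
    obtain ⟨hea, hae, hfa, haf⟩ := mk11 a ha
    obtain ⟨hfb, hbf, heb, hbe⟩ := mk22 b hb
    obtain ⟨t, ht⟩ := hsurj (Φ a + Φ b)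
    suffices hts : t = a + b by rw [← hts, ht]
    have htswap : Φ t = Φ b + Φ a := by rw [ht]; abel
    have h1 : θ•(e*t) + φ•(t*e) = θ•(e*a) + φ•(a*e) :=
      coll_l a b t e ht (by rw [heb, hbe, smul_zero, smul_zero, add_zero])
    have h11 : e*(t*e) = a := by
      have H := congrArg (fun z => e * z * e) h1
      simp only [mul_add, add_mul, smul_add, mul_smul_comm, smul_mul_assoc, mul_assoc,
        mul_zero, zero_mul, smul_zero, add_zero, zero_add, mul_one, one_mul,
        hee, hef, hfe, hff, liftL hee, liftL hef, liftL hfe, liftL hff, hea, hae, hfa, haf, hfb, hbf, heb, hbe,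
        liftL hea, liftL hae, liftL hfa, liftL haf,
        liftL hfb, liftL hbf, liftL heb, liftL hbe] at H
      rw [← add_smul, ← add_smul, hθφ] at H
      exact cA S hsum _ _ H
    have h12 : e*(t*f) = 0 := by
      have H := congrArg (fun z => e * z * f) h1
      simp only [mul_add, add_mul, smul_add, mul_smul_comm, smul_mul_assoc, mul_assoc,
        mul_zero, zero_mul, smul_zero, add_zero, zero_add, mul_one, one_mul,
        hee, hef, hfe, hff, liftL hee, liftL hef, liftL hfe, liftL hff, hea, hae, hfa, haf, hfb, hbf, heb, hbe,
        liftL hea, liftL hae, liftL hfa, liftL haf,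
        liftL hfb, liftL hbf, liftL heb, liftL hbe] at H
      exact (smul_eq_zero.mp H).resolve_left hθ0
    have h2 : θ•(t*e) + φ•(e*t) = θ•(a*e) + φ•(e*a) :=
      coll_r a b t e ht (by rw [hbe, heb, smul_zero, smul_zero, add_zero])
    have h21 : f*(t*e) = 0 := by
      have H := congrArg (fun z => f * z * e) h2
      simp only [mul_add, add_mul, smul_add, mul_smul_comm, smul_mul_assoc, mul_assoc,
        mul_zero, zero_mul, smul_zero, add_zero, zero_add, mul_one, one_mul,
        hee, hef, hfe, hff, liftL hee, liftL hef, liftL hfe, liftL hff, hea, hae, hfa, haf, hfb, hbf, heb, hbe,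
        liftL hea, liftL hae, liftL hfa, liftL haf,
        liftL hfb, liftL hbf, liftL heb, liftL hbe] at H
      exact (smul_eq_zero.mp H).resolve_left hθ0
    have h3 : θ•(f*t) + φ•(t*f) = θ•(f*b) + φ•(b*f) :=
      coll_l b a t f htswap (by rw [hfa, haf, smul_zero, smul_zero, add_zero])
    have h22 : f*(t*f) = b := by
      have H := congrArg (fun z => f * z * f) h3
      simp only [mul_add, add_mul, smul_add, mul_smul_comm, smul_mul_assoc, mul_assoc,
        mul_zero, zero_mul, smul_zero, add_zero, zero_add, mul_one, one_mul,
        hee, hef, hfe, hff, liftL hee, liftL hef, liftL hfe, liftL hff, hea, hae, hfa, haf, hfb, hbf, heb, hbe,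
        liftL hea, liftL hae, liftL hfa, liftL haf,
        liftL hfb, liftL hbf, liftL heb, liftL hbe] at H
      rw [← add_smul, ← add_smul, hθφ] at H
      exact cA S hsum _ _ H
    rw [hdecomp t, h11, h12, h21, h22]
    abel
  -- additivity within A12
  have a12add : ∀ x y : A, e*x*f = x → e*y*f = y → Φ (x + y) = Φ x + Φ y := by
    have a12θ : ∀ x y : A, e*x*f = x → e*y*f = y → Φ (θ•(x+y)) = Φ (θ•x) + Φ (θ•y) := by
      intro x y hx hy
      obtain ⟨hex, hxf, hxe, hfx⟩ := mk12 x hx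
      obtain ⟨hey, hyf, hye, hfy⟩ := mk12 y hy
      have hyx : y * x = 0 := by rw [← hex, ← mul_assoc, hye, zero_mul]
      have hxy : x * y = 0 := by rw [← hey, ← mul_assoc, hxe, zero_mul]
      have hB := hP (e+y) (x+f)
      rw [show (e+y)*(x+f) = x + y by
        rw [add_mul, mul_add, mul_add, hex, hef, hyx, hyf]; abel] at hB
      rw [show (x+f)*(e+y) = 0 by
        rw [add_mul, mul_add, mul_add, hxe, hxy, hfe, hfy]; abel] at hB
      rw [smul_zero, add_zero] at hB
      rw [rowA e y (by rw [heidem, heidem]) hy] at hB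
      rw [show Φ (x + f) = Φ f + Φ x from by
        rw [add_comm x f]; exact col2 f x (by rw [hff, hff]) hx] at hB
      have e1 := hP e x
      rw [hex, hxe, smul_zero, add_zero] at e1
      have e2 := hP e f
      rw [hef, hfe, smul_zero, smul_zero, add_zero, h0] at e2
      have e3 := hP y x
      rw [hyx, hxy, smul_zero, smul_zero, add_zero, h0] at e3
      have e4 := hP y f
      rw [hyf, hfy, smul_zero, add_zero] at e4
      rw [hB]
      rw [show θ•((Φ e + Φ y) * (Φ f + Φ x)) + φ•((Φ f + Φ x) * (Φ e + Φ y)) =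
          (θ•(Φ e*Φ x) + φ•(Φ x*Φ e)) + ((θ•(Φ y*Φ f) + φ•(Φ f*Φ y)) +
          ((θ•(Φ e*Φ f) + φ•(Φ f*Φ e)) + (θ•(Φ y*Φ x) + φ•(Φ x*Φ y)))) by
        simp only [mul_add, add_mul, smul_add]; abel]
      rw [← e1, ← e2, ← e3, ← e4, add_zero, add_zero]
    intro x y hx hy
    have hx' : e*(θ⁻¹•x)*f = θ⁻¹•x := by rw [mul_smul_comm, smul_mul_assoc, hx]
    have hy' : e*(θ⁻¹•y)*f = θ⁻¹•y := by rw [mul_smul_comm, smul_mul_assoc, hy]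
    have h := a12θ _ _ hx' hy'
    simpa [smul_add, smul_smul, mul_inv_cancel₀ hθ0] using h
  -- additivity within A21
  have a21add : ∀ x y : A, f*x*e = x → f*y*e = y → Φ (x + y) = Φ x + Φ y := by
    have a21θ : ∀ x y : A, f*x*e = x → f*y*e = y → Φ (θ•(x+y)) = Φ (θ•x) + Φ (θ•y) := by
      intro x y hx hy
      obtain ⟨hfx, hxe, hex, hxf⟩ := mk21 x hx
      obtain ⟨hfy, hye, hey, hyf⟩ := mk21 y hy
      have hyx : y * x = 0 := by rw [← hfx, ← mul_assoc, hyf, zero_mul]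
      have hxy : x * y = 0 := by rw [← hfy, ← mul_assoc, hxf, zero_mul]
      have hB := hP (f+y) (x+e)
      rw [show (f+y)*(x+e) = x + y by
        rw [add_mul, mul_add, mul_add, hfx, hfe, hyx, hye]; abel] at hB
      rw [show (x+e)*(f+y) = 0 by
        rw [add_mul, mul_add, mul_add, hxf, hxy, hef, hey]; abel] at hB
      rw [smul_zero, add_zero] at hB
      rw [row2 f y (by rw [hff, hff]) hy] at hB
      rw [show Φ (x + e) = Φ e + Φ x from by
        rw [add_comm x e]; exact col e x (by rw [heidem, heidem]) hx] at hB
      have e1 := hP f x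
      rw [hfx, hxf, smul_zero, add_zero] at e1
      have e2 := hP f e
      rw [hfe, hef, smul_zero, smul_zero, add_zero, h0] at e2
      have e3 := hP y x
      rw [hyx, hxy, smul_zero, smul_zero, add_zero, h0] at e3
      have e4 := hP y e
      rw [hye, hey, smul_zero, add_zero] at e4
      rw [hB]
      rw [show θ•((Φ f + Φ y) * (Φ e + Φ x)) + φ•((Φ e + Φ x) * (Φ f + Φ y)) =
          (θ•(Φ f*Φ x) + φ•(Φ x*Φ f)) + ((θ•(Φ y*Φ e) + φ•(Φ e*Φ y)) +
          ((θ•(Φ f*Φ e) + φ•(Φ e*Φ f)) + (θ•(Φ y*Φ x) + φ•(Φ x*Φ y)))) by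
        simp only [mul_add, add_mul, smul_add]; abel]
      rw [← e1, ← e2, ← e3, ← e4, add_zero, add_zero]
    intro x y hx hy
    have hx' : f*(θ⁻¹•x)*e = θ⁻¹•x := by rw [mul_smul_comm, smul_mul_assoc, hx]
    have hy' : f*(θ⁻¹•y)*e = θ⁻¹•y := by rw [mul_smul_comm, smul_mul_assoc, hy]
    have h := a21θ _ _ hx' hy'
    simpa [smul_add, smul_smul, mul_inv_cancel₀ hθ0] using h
  -- additivity within A11
  have a11add : ∀ x y : A, e*x*e = x → e*y*e = y → Φ (x + y) = Φ x + Φ y := by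
    intro x y hx hy
    obtain ⟨hex, hxe, hfx, hxf⟩ := mk11 x hx
    obtain ⟨hey, hye, hfy, hyf⟩ := mk11 y hy
    obtain ⟨t, ht⟩ := hsurj (Φ x + Φ y)
    suffices hts : t = x + y by rw [← hts, ht]
    have h1 : θ•(f*t) + φ•(t*f) = 0 := by
      apply hinj
      rw [padd_l x y t f ht,
        show θ•(f*x) + φ•(x*f) = 0 by rw [hfx, hxf, smul_zero, smul_zero, add_zero],
        show θ•(f*y) + φ•(y*f) = 0 by rw [hfy, hyf, smul_zero, smul_zero, add_zero],
        h0, add_zero]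
    have h2 : θ•(t*f) + φ•(f*t) = 0 := by
      apply hinj
      rw [padd_r x y t f ht,
        show θ•(x*f) + φ•(f*x) = 0 by rw [hxf, hfx, smul_zero, smul_zero, add_zero],
        show θ•(y*f) + φ•(f*y) = 0 by rw [hyf, hfy, smul_zero, smul_zero, add_zero],
        h0, add_zero]
    have h21 : f*(t*e) = 0 := by
      have H := congrArg (fun z => f * z * e) h1
      simp only [mul_add, add_mul, smul_add, mul_smul_comm, smul_mul_assoc, mul_assoc,
        mul_zero, zero_mul, smul_zero, add_zero, zero_add, mul_one, one_mul,
        hee, hef, hfe, hff, liftL hee, liftL hef, liftL hfe, liftL hff] at H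
      exact (smul_eq_zero.mp H).resolve_left hθ0
    have h22 : f*(t*f) = 0 := by
      have H := congrArg (fun z => f * z * f) h1
      simp only [mul_add, add_mul, smul_add, mul_smul_comm, smul_mul_assoc, mul_assoc,
        mul_zero, zero_mul, smul_zero, add_zero, zero_add, mul_one, one_mul,
        hee, hef, hfe, hff, liftL hee, liftL hef, liftL hfe, liftL hff] at H
      rw [← add_smul, hθφ] at H
      exact (smul_eq_zero.mp H).resolve_left hsum
    have h12 : e*(t*f) = 0 := by
      have H := congrArg (fun z => e * z * f) h2
      simp only [mul_add, add_mul, smul_add, mul_smul_comm, smul_mul_assoc, mul_assoc,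
        mul_zero, zero_mul, smul_zero, add_zero, zero_add, mul_one, one_mul,
        hee, hef, hfe, hff, liftL hee, liftL hef, liftL hfe, liftL hff] at H
      exact (smul_eq_zero.mp H).resolve_left hθ0
    have hft : f*t = 0 := by
      have hdd : f*t = f*(t*e) + f*(t*f) := by rw [hfdef]; noncomm_ring
      rw [hdd, h21, h22, add_zero]
    have hte : t*e = e*(t*e) := by
      have hdd : t*e = e*(t*e) + f*(t*e) := by rw [hfdef]; noncomm_ring
      conv_lhs => rw [hdd, h21]
      rw [add_zero]
    have h11 : e*(t*e) = x + y := by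
      have key : ∀ c : A, (e*(t*e) - (x+y)) * c * f = 0 := by
        intro c
        have hplr := padd_r x y t (e*c*f) ht
        rw [show θ•(x*(e*c*f)) + φ•((e*c*f)*x) = θ•(x*(c*f)) by
          simp only [mul_assoc, liftL hxe, hfx, mul_zero, smul_zero, add_zero]] at hplr
        rw [show θ•(y*(e*c*f)) + φ•((e*c*f)*y) = θ•(y*(c*f)) by
          simp only [mul_assoc, liftL hye, hfy, mul_zero, smul_zero, add_zero]] at hplr
        rw [← a12add (θ•(x*(c*f))) (θ•(y*(c*f)))
          (by simp only [mul_smul_comm, smul_mul_assoc, mul_assoc, liftL hex, hff])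
          (by simp only [mul_smul_comm, smul_mul_assoc, mul_assoc, liftL hey, hff])] at hplr
        have H := hinj hplr
        rw [show (e*c*f)*t = e*(c*(f*t)) by simp only [mul_assoc], hft, mul_zero, mul_zero,
          smul_zero, add_zero, ← smul_add] at H
        simp only [mul_assoc] at H
        have H2 := cA θ hθ0 _ _ H
        calc (e*(t*e) - (x+y))*c*f = t*(e*(c*f)) - (x*(c*f) + y*(c*f)) := by
              rw [show e*(t*e) = t*e from hte.symm]
              simp only [sub_mul, add_mul, mul_assoc]
          _ = 0 := by rw [H2, sub_self]
      exact sub_eq_zero.mp (prime_rf _ key)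
    rw [hdecomp t, h11, h12, h21, h22]
    abel
  -- additivity within A22
  have a22add : ∀ x y : A, f*x*f = x → f*y*f = y → Φ (x + y) = Φ x + Φ y := by
    intro x y hx hy
    obtain ⟨hfx, hxf, hex, hxe⟩ := mk22 x hx
    obtain ⟨hfy, hyf, hey, hye⟩ := mk22 y hy
    obtain ⟨t, ht⟩ := hsurj (Φ x + Φ y)
    suffices hts : t = x + y by rw [← hts, ht]
    have h1 : θ•(e*t) + φ•(t*e) = 0 := by
      apply hinj
      rw [padd_l x y t e ht,
        show θ•(e*x) + φ•(x*e) = 0 by rw [hex, hxe, smul_zero, smul_zero, add_zero],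
        show θ•(e*y) + φ•(y*e) = 0 by rw [hey, hye, smul_zero, smul_zero, add_zero],
        h0, add_zero]
    have h2 : θ•(t*e) + φ•(e*t) = 0 := by
      apply hinj
      rw [padd_r x y t e ht,
        show θ•(x*e) + φ•(e*x) = 0 by rw [hxe, hex, smul_zero, smul_zero, add_zero],
        show θ•(y*e) + φ•(e*y) = 0 by rw [hye, hey, smul_zero, smul_zero, add_zero],
        h0, add_zero]
    have h12 : e*(t*f) = 0 := by
      have H := congrArg (fun z => e * z * f) h1
      simp only [mul_add, add_mul, smul_add, mul_smul_comm, smul_mul_assoc, mul_assoc,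
        mul_zero, zero_mul, smul_zero, add_zero, zero_add, mul_one, one_mul,
        hee, hef, hfe, hff, liftL hee, liftL hef, liftL hfe, liftL hff] at H
      exact (smul_eq_zero.mp H).resolve_left hθ0
    have h11 : e*(t*e) = 0 := by
      have H := congrArg (fun z => e * z * e) h1
      simp only [mul_add, add_mul, smul_add, mul_smul_comm, smul_mul_assoc, mul_assoc,
        mul_zero, zero_mul, smul_zero, add_zero, zero_add, mul_one, one_mul,
        hee, hef, hfe, hff, liftL hee, liftL hef, liftL hfe, liftL hff] at H
      rw [← add_smul, hθφ] at H
      exact (smul_eq_zero.mp H).resolve_left hsum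
    have h21 : f*(t*e) = 0 := by
      have H := congrArg (fun z => f * z * e) h2
      simp only [mul_add, add_mul, smul_add, mul_smul_comm, smul_mul_assoc, mul_assoc,
        mul_zero, zero_mul, smul_zero, add_zero, zero_add, mul_one, one_mul,
        hee, hef, hfe, hff, liftL hee, liftL hef, liftL hfe, liftL hff] at H
      exact (smul_eq_zero.mp H).resolve_left hθ0
    have het : e*t = 0 := by
      have hdd : e*t = e*(t*e) + e*(t*f) := by rw [hfdef]; noncomm_ring
      rw [hdd, h11, h12, add_zero]
    have htf : t*f = f*(t*f) := by
      have hdd : t*f = e*(t*f) + f*(t*f) := by rw [hfdef]; noncomm_ring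
      conv_lhs => rw [hdd, h12]
      rw [zero_add]
    have h22 : f*(t*f) = x + y := by
      have key : ∀ c : A, (f*(t*f) - (x+y)) * c * e = 0 := by
        intro c
        have hplr := padd_r x y t (f*c*e) ht
        rw [show θ•(x*(f*c*e)) + φ•((f*c*e)*x) = θ•(x*(c*e)) by
          simp only [mul_assoc, liftL hxf, hex, mul_zero, smul_zero, add_zero]] at hplr
        rw [show θ•(y*(f*c*e)) + φ•((f*c*e)*y) = θ•(y*(c*e)) by
          simp only [mul_assoc, liftL hyf, hey, mul_zero, smul_zero, add_zero]] at hplr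
        rw [← a21add (θ•(x*(c*e))) (θ•(y*(c*e)))
          (by simp only [mul_smul_comm, smul_mul_assoc, mul_assoc, liftL hfx, hee])
          (by simp only [mul_smul_comm, smul_mul_assoc, mul_assoc, liftL hfy, hee])] at hplr
        have H := hinj hplr
        rw [show (f*c*e)*t = f*(c*(e*t)) by simp only [mul_assoc], het, mul_zero, mul_zero,
          smul_zero, add_zero, ← smul_add] at H
        simp only [mul_assoc] at H
        have H2 := cA θ hθ0 _ _ H
        calc (f*(t*f) - (x+y))*c*e = t*(f*(c*e)) - (x*(c*e) + y*(c*e)) := by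
              rw [show f*(t*f) = t*f from htf.symm]
              simp only [sub_mul, add_mul, mul_assoc]
          _ = 0 := by rw [H2, sub_self]
      exact sub_eq_zero.mp (prime_re _ key)
    rw [hdecomp t, h11, h12, h21, h22]
    abel
  -- three corners : A11 + A12 + A22
  have t3 : ∀ x y z : A, e*x*e = x → e*y*f = y → f*z*f = z →
      Φ (x + y + z) = Φ x + Φ y + Φ z := by
    intro x y z hx hy hz
    obtain ⟨hex, hxe, hfx, hxf⟩ := mk11 x hx
    obtain ⟨hey, hyf, hye, hfy⟩ := mk12 y hy
    obtain ⟨hfz, hzf, hez, hze⟩ := mk22 z hz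
    have hxy : Φ (x + y) = Φ x + Φ y := rowA x y hx hy
    obtain ⟨t, ht⟩ := hsurj (Φ (x+y) + Φ z)
    suffices hts : t = x + y + z by rw [← hts, ht, hxy]
    have hA : θ•(e*t) + φ•(t*e) = θ•(e*(x+y)) + φ•((x+y)*e) :=
      coll_l (x+y) z t e ht (by rw [hez, hze, smul_zero, smul_zero, add_zero])
    have h11 : e*(t*e) = x := by
      have H := congrArg (fun w => e * w * e) hA
      simp only [mul_add, add_mul, smul_add, mul_smul_comm, smul_mul_assoc, mul_assoc,
        mul_zero, zero_mul, smul_zero, add_zero, zero_add, mul_one, one_mul,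
        hee, hef, hfe, hff, liftL hee, liftL hef, liftL hfe, liftL hff,
        hex, hxe, hfx, hxf, hey, hyf, hye, hfy, hfz, hzf, hez, hze,
        liftL hex, liftL hxe, liftL hfx, liftL hxf,
        liftL hey, liftL hyf, liftL hye, liftL hfy,
        liftL hfz, liftL hzf, liftL hez, liftL hze] at H
      rw [← add_smul, ← add_smul, hθφ] at H
      exact cA S hsum _ _ H
    have h12 : e*(t*f) = y := by
      have H := congrArg (fun w => e * w * f) hA
      simp only [mul_add, add_mul, smul_add, mul_smul_comm, smul_mul_assoc, mul_assoc,
        mul_zero, zero_mul, smul_zero, add_zero, zero_add, mul_one, one_mul,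
        hee, hef, hfe, hff, liftL hee, liftL hef, liftL hfe, liftL hff,
        hex, hxe, hfx, hxf, hey, hyf, hye, hfy, hfz, hzf, hez, hze,
        liftL hex, liftL hxe, liftL hfx, liftL hxf,
        liftL hey, liftL hyf, liftL hye, liftL hfy,
        liftL hfz, liftL hzf, liftL hez, liftL hze] at H
      exact cA θ hθ0 _ _ H
    have hB : θ•(t*e) + φ•(e*t) = θ•((x+y)*e) + φ•(e*(x+y)) :=
      coll_r (x+y) z t e ht (by rw [hze, hez, smul_zero, smul_zero, add_zero])
    have h21 : f*(t*e) = 0 := by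
      have H := congrArg (fun w => f * w * e) hB
      simp only [mul_add, add_mul, smul_add, mul_smul_comm, smul_mul_assoc, mul_assoc,
        mul_zero, zero_mul, smul_zero, add_zero, zero_add, mul_one, one_mul,
        hee, hef, hfe, hff, liftL hee, liftL hef, liftL hfe, liftL hff,
        hex, hxe, hfx, hxf, hey, hyf, hye, hfy, hfz, hzf, hez, hze,
        liftL hex, liftL hxe, liftL hfx, liftL hxf,
        liftL hey, liftL hyf, liftL hye, liftL hfy,
        liftL hfz, liftL hzf, liftL hez, liftL hze] at H
      exact (smul_eq_zero.mp H).resolve_left hθ0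
    have h11w : ∀ w : A, e*(t*(e*w)) = x*w := fun w => by
      rw [show e*(t*(e*w)) = e*(t*e)*w by simp only [mul_assoc], h11]
    have h22 : f*(t*f) = z := by
      have key : ∀ c : A, e * c * (f*(t*f) - z) = 0 := by
        intro c
        have hC := padd_l (x+y) z t (e*c*f) ht
        rw [show θ•((e*c*f)*(x+y)) + φ•((x+y)*(e*c*f)) = φ•(x*(c*f)) by
          simp only [mul_add, add_mul, smul_add, mul_assoc, hfx, hfy, liftL hxe,
            liftL hye, mul_zero, zero_mul, smul_zero, add_zero, zero_add]] at hC
        rw [show θ•((e*c*f)*z) + φ•(z*(e*c*f)) = θ•(e*(c*z)) by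
          simp only [mul_assoc, hfz, liftL hze, zero_mul, mul_zero, smul_zero, add_zero]] at hC
        rw [← a12add (φ•(x*(c*f))) (θ•(e*(c*z)))
          (by simp only [mul_smul_comm, smul_mul_assoc, mul_assoc, liftL hex, hff])
          (by simp only [mul_smul_comm, smul_mul_assoc, mul_assoc, liftL hee, hzf])] at hC
        have H := congrArg (fun w => e * w * f) (hinj hC)
        simp only [mul_add, add_mul, smul_add, mul_smul_comm, smul_mul_assoc, mul_assoc,
        mul_zero, zero_mul, smul_zero, add_zero, zero_add, mul_one, one_mul,
        hee, hef, hfe, hff, liftL hee, liftL hef, liftL hfe, liftL hff,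
        hex, hxe, hfx, hxf, hey, hyf, hye, hfy, hfz, hzf, hez, hze,
        liftL hex, liftL hxe, liftL hfx, liftL hxf,
        liftL hey, liftL hyf, liftL hye, liftL hfy,
        liftL hfz, liftL hzf, liftL hez, liftL hze, h11, h11w] at H
        have H2 : θ•(e*(c*(f*(t*f)))) = θ•(e*(c*z)) := by
          have H3 := congrArg (fun u => u - φ•(x*(c*f))) H
          simpa using H3
        have H4 := cA θ hθ0 _ _ H2
        rw [show e*c*(f*(t*f) - z) = e*(c*(f*(t*f))) - e*(c*z) by
          simp only [mul_sub, mul_assoc], H4, sub_self]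
      exact sub_eq_zero.mp (prime_le _ key)
    rw [hdecomp t, h11, h12, h21, h22]
    abel
  -- four corners
  have t4 : ∀ p q r u : A, e*p*e = p → e*q*f = q → f*r*f = r → f*u*e = u →
      Φ (p + q + r + u) = Φ (p + q + r) + Φ u := by
    intro p q r u hp hq hr hu
    obtain ⟨hep, hpe, hfp, hpf⟩ := mk11 p hp
    obtain ⟨heq, hqf, hqe, hfq⟩ := mk12 q hq
    obtain ⟨hfr, hrf, her, hre⟩ := mk22 r hr
    obtain ⟨hfu, hue, heu, huf⟩ := mk21 u hu
    obtain ⟨t, ht⟩ := hsurj (Φ (p+q+r) + Φ u)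
    suffices hts : t = p + q + r + u by rw [← hts, ht]
    -- Test 1 : kills u, gives the (1,2) corner
    have h12 : e*(t*f) = q := by
      have key : ∀ c : A, f * c * (e*(t*f) - q) = 0 := by
        intro c
        have h1 : θ•((f*c*e)*t) + φ•(t*(f*c*e)) =
            θ•((f*c*e)*(p+q+r)) + φ•((p+q+r)*(f*c*e)) :=
          coll_l (p+q+r) u t (f*c*e) ht
            (by simp only [mul_assoc, heu, liftL huf, mul_zero, zero_mul,
              smul_zero, add_zero])
        have H := congrArg (fun w => f * w * f) h1
        simp only [mul_add, add_mul, smul_add, mul_smul_comm, smul_mul_assoc, mul_assoc,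
        mul_zero, zero_mul, smul_zero, add_zero, zero_add, mul_one, one_mul,
        hee, hef, hfe, hff, liftL hee, liftL hef, liftL hfe, liftL hff,
        hep, hpe, hfp, hpf, heq, hqf, hqe, hfq, hfr, hrf, her, hre,
        hfu, hue, heu, huf,
        liftL hep, liftL hpe, liftL hfp, liftL hpf,
        liftL heq, liftL hqf, liftL hqe, liftL hfq,
        liftL hfr, liftL hrf, liftL her, liftL hre,
        liftL hfu, liftL hue, liftL heu, liftL huf] at H
        have H2 := cA θ hθ0 _ _ H
        rw [show f*c*(e*(t*f) - q) = f*(c*(e*(t*f))) - f*(c*q) by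
          simp only [mul_sub, mul_assoc], H2, sub_self]
      exact sub_eq_zero.mp (prime_lf _ key)
    -- Test 2 : middle tests with v = e*c*f
    have T2 : ∀ c : A, θ•((e*c*f)*t) + φ•(t*(e*c*f)) =
        θ•(e*(c*u)) + (θ•(e*(c*r)) + φ•(p*(c*f))) + φ•(u*(c*f)) := by
      intro c
      have hplr := padd_l (p+q+r) u t (e*c*f) ht
      rw [show θ•((e*c*f)*(p+q+r)) + φ•((p+q+r)*(e*c*f)) =
          θ•(e*(c*r)) + φ•(p*(c*f)) by
        simp only [mul_add, add_mul, smul_add, mul_assoc, hfp, hfq, hfr, liftL hpe,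
          liftL hqe, liftL hre, hqe, hre, mul_zero, zero_mul, smul_zero, add_zero,
          zero_add]] at hplr
      rw [show θ•((e*c*f)*u) + φ•(u*(e*c*f)) = θ•(e*(c*u)) + φ•(u*(c*f)) by
        simp only [mul_assoc, hfu, liftL hue]] at hplr
      rw [diag (θ•(e*(c*u))) (φ•(u*(c*f)))
        (by simp only [mul_smul_comm, smul_mul_assoc, mul_assoc, liftL hee, hue])
        (by simp only [mul_smul_comm, smul_mul_assoc, mul_assoc, liftL hfu, hff])] at hplr
      rw [show Φ (θ•(e*(c*r)) + φ•(p*(c*f))) + (Φ (θ•(e*(c*u))) + Φ (φ•(u*(c*f)))) =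
          Φ (θ•(e*(c*u)) + (θ•(e*(c*r)) + φ•(p*(c*f))) + φ•(u*(c*f))) by
        rw [t3 (θ•(e*(c*u))) (θ•(e*(c*r)) + φ•(p*(c*f))) (φ•(u*(c*f)))
          (by simp only [mul_smul_comm, smul_mul_assoc, mul_assoc, liftL hee, hue])
          (by simp only [mul_smul_comm, smul_mul_assoc, smul_add, mul_add, add_mul,
            mul_assoc, liftL hee, liftL hep, hrf, hff])
          (by simp only [mul_smul_comm, smul_mul_assoc, mul_assoc, liftL hfu, hff])]
        abel] at hplr
      exact hinj hplr
    have h21 : f*(t*e) = u := by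
      have key : ∀ c : A, e * c * (f*(t*e) - u) = 0 := by
        intro c
        have H := congrArg (fun w => e * w * e) (T2 c)
        simp only [mul_add, add_mul, smul_add, mul_smul_comm, smul_mul_assoc, mul_assoc,
        mul_zero, zero_mul, smul_zero, add_zero, zero_add, mul_one, one_mul,
        hee, hef, hfe, hff, liftL hee, liftL hef, liftL hfe, liftL hff,
        hep, hpe, hfp, hpf, heq, hqf, hqe, hfq, hfr, hrf, her, hre,
        hfu, hue, heu, huf,
        liftL hep, liftL hpe, liftL hfp, liftL hpf,
        liftL heq, liftL hqf, liftL hqe, liftL hfq,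
        liftL hfr, liftL hrf, liftL her, liftL hre,
        liftL hfu, liftL hue, liftL heu, liftL huf] at H
        have H2 := cA θ hθ0 _ _ H
        rw [show e*c*(f*(t*e) - u) = e*(c*(f*(t*e))) - e*(c*u) by
          simp only [mul_sub, mul_assoc], H2, sub_self]
      exact sub_eq_zero.mp (prime_le _ key)
    have EQC : ∀ c : A, θ•(e*(c*(f*(t*f)))) + φ•(e*(t*(e*(c*f)))) =
        θ•(e*(c*r)) + φ•(p*(c*f)) := by
      intro c
      have H := congrArg (fun w => e * w * f) (T2 c)
      simp only [mul_add, add_mul, smul_add, mul_smul_comm, smul_mul_assoc, mul_assoc,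
        mul_zero, zero_mul, smul_zero, add_zero, zero_add, mul_one, one_mul,
        hee, hef, hfe, hff, liftL hee, liftL hef, liftL hfe, liftL hff,
        hep, hpe, hfp, hpf, heq, hqf, hqe, hfq, hfr, hrf, her, hre,
        hfu, hue, heu, huf,
        liftL hep, liftL hpe, liftL hfp, liftL hpf,
        liftL heq, liftL hqf, liftL hqe, liftL hfq,
        liftL hfr, liftL hrf, liftL her, liftL hre,
        liftL hfu, liftL hue, liftL heu, liftL huf] at H
      exact H
    have T3' : ∀ c : A, θ•(t*(e*c*f)) + φ•((e*c*f)*t) =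
        φ•(e*(c*u)) + (θ•(p*(c*f)) + φ•(e*(c*r))) + θ•(u*(c*f)) := by
      intro c
      have hplr := padd_r (p+q+r) u t (e*c*f) ht
      rw [show θ•((p+q+r)*(e*c*f)) + φ•((e*c*f)*(p+q+r)) =
          θ•(p*(c*f)) + φ•(e*(c*r)) by
        simp only [mul_add, add_mul, smul_add, mul_assoc, hfp, hfq, hfr, liftL hpe,
          liftL hqe, liftL hre, hqe, hre, mul_zero, zero_mul, smul_zero, add_zero,
          zero_add]] at hplr
      rw [show θ•(u*(e*c*f)) + φ•((e*c*f)*u) = φ•(e*(c*u)) + θ•(u*(c*f)) by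
        simp only [mul_assoc, hfu, liftL hue]; abel] at hplr
      rw [diag (φ•(e*(c*u))) (θ•(u*(c*f)))
        (by simp only [mul_smul_comm, smul_mul_assoc, mul_assoc, liftL hee, hue])
        (by simp only [mul_smul_comm, smul_mul_assoc, mul_assoc, liftL hfu, hff])] at hplr
      rw [show Φ (θ•(p*(c*f)) + φ•(e*(c*r))) + (Φ (φ•(e*(c*u))) + Φ (θ•(u*(c*f)))) =
          Φ (φ•(e*(c*u)) + (θ•(p*(c*f)) + φ•(e*(c*r))) + θ•(u*(c*f))) by
        rw [t3 (φ•(e*(c*u))) (θ•(p*(c*f)) + φ•(e*(c*r))) (θ•(u*(c*f)))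
          (by simp only [mul_smul_comm, smul_mul_assoc, mul_assoc, liftL hee, hue])
          (by simp only [mul_smul_comm, smul_mul_assoc, smul_add, mul_add, add_mul,
            mul_assoc, liftL hee, liftL hep, hrf, hff])
          (by simp only [mul_smul_comm, smul_mul_assoc, mul_assoc, liftL hfu, hff])]
        abel] at hplr
      exact hinj hplr
    have EQD : ∀ c : A, θ•(e*(t*(e*(c*f)))) + φ•(e*(c*(f*(t*f)))) =
        θ•(p*(c*f)) + φ•(e*(c*r)) := by
      intro c
      have H := congrArg (fun w => e * w * f) (T3' c)
      simp only [mul_add, add_mul, smul_add, mul_smul_comm, smul_mul_assoc, mul_assoc,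
        mul_zero, zero_mul, smul_zero, add_zero, zero_add, mul_one, one_mul,
        hee, hef, hfe, hff, liftL hee, liftL hef, liftL hfe, liftL hff,
        hep, hpe, hfp, hpf, heq, hqf, hqe, hfq, hfr, hrf, her, hre,
        hfu, hue, heu, huf,
        liftL hep, liftL hpe, liftL hfp, liftL hpf,
        liftL heq, liftL hqf, liftL hqe, liftL hfq,
        liftL hfr, liftL hrf, liftL her, liftL hre,
        liftL hfu, liftL hue, liftL heu, liftL huf] at H
      exact H
    have hdiag : e*(t*e) = p ∧ f*(t*f) = r := by
      by_cases hcase : θ = φ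
      · -- the (e - f) trick
        have hg : θ•((e-f)*t) + φ•(t*(e-f)) =
            θ•((e-f)*(p+q+r)) + φ•((p+q+r)*(e-f)) := by
          apply coll_l (p+q+r) u t (e-f) ht
          rw [sub_mul, mul_sub, heu, hfu, hue, huf, zero_sub, sub_zero, hcase, smul_neg,
            neg_add_cancel]
        constructor
        · have H := congrArg (fun w => e * w * e) hg
          simp only [sub_mul, mul_sub, smul_sub, mul_add, add_mul, smul_add, mul_smul_comm, smul_mul_assoc, mul_assoc,
        mul_zero, zero_mul, smul_zero, add_zero, zero_add, mul_one, one_mul,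
        hee, hef, hfe, hff, liftL hee, liftL hef, liftL hfe, liftL hff,
        hep, hpe, hfp, hpf, heq, hqf, hqe, hfq, hfr, hrf, her, hre,
        hfu, hue, heu, huf,
        liftL hep, liftL hpe, liftL hfp, liftL hpf,
        liftL heq, liftL hqf, liftL hqe, liftL hfq,
        liftL hfr, liftL hrf, liftL her, liftL hre,
        liftL hfu, liftL hue, liftL heu, liftL huf, sub_zero, zero_sub, smul_neg,
        neg_mul, mul_neg, neg_neg, neg_zero, neg_add_rev] at H
          rw [← add_smul, ← add_smul, hθφ] at H
          exact cA S hsum _ _ H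
        · have H := congrArg (fun w => f * w * f) hg
          simp only [sub_mul, mul_sub, smul_sub, mul_add, add_mul, smul_add, mul_smul_comm, smul_mul_assoc, mul_assoc,
        mul_zero, zero_mul, smul_zero, add_zero, zero_add, mul_one, one_mul,
        hee, hef, hfe, hff, liftL hee, liftL hef, liftL hfe, liftL hff,
        hep, hpe, hfp, hpf, heq, hqf, hqe, hfq, hfr, hrf, her, hre,
        hfu, hue, heu, huf,
        liftL hep, liftL hpe, liftL hfp, liftL hpf,
        liftL heq, liftL hqf, liftL hqe, liftL hfq,
        liftL hfr, liftL hrf, liftL her, liftL hre,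
        liftL hfu, liftL hue, liftL heu, liftL huf, sub_zero, zero_sub, smul_neg,
        neg_mul, mul_neg, neg_neg, neg_zero, neg_add_rev] at H
          rw [← neg_add, ← neg_add] at H
          have H2 := neg_inj.mp H
          rw [← add_smul, ← add_smul, hθφ] at H2
          exact cA S hsum _ _ H2
      · -- θ ≠ φ : combine EQC and EQD
        have main : ∀ c : A, e*(c*(f*(t*f))) = e*(c*r) ∧
            e*(t*(e*(c*f))) = p*(c*f) := by
          intro c
          have h1 := EQC c
          have h2 := EQD c
          have hsum2 : (θ+φ)•(e*(c*(f*(t*f))) + e*(t*(e*(c*f)))) =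
              (θ+φ)•(e*(c*r) + p*(c*f)) := by
            simp only [add_smul, smul_add]
            calc θ•(e*(c*(f*(t*f)))) + φ•(e*(c*(f*(t*f)))) +
                  (θ•(e*(t*(e*(c*f)))) + φ•(e*(t*(e*(c*f))))) =
                (θ•(e*(c*(f*(t*f)))) + φ•(e*(t*(e*(c*f))))) +
                  (θ•(e*(t*(e*(c*f)))) + φ•(e*(c*(f*(t*f))))) := by abel
              _ = (θ•(e*(c*r)) + φ•(p*(c*f))) + (θ•(p*(c*f)) + φ•(e*(c*r))) := by
                  rw [h1, h2]
              _ = θ•(e*(c*r)) + φ•(e*(c*r)) + (θ•(p*(c*f)) + φ•(p*(c*f))) := by abel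
          have hdiff : (θ-φ)•(e*(c*(f*(t*f))) - e*(t*(e*(c*f)))) =
              (θ-φ)•(e*(c*r) - p*(c*f)) := by
            simp only [sub_smul, smul_sub]
            calc θ•(e*(c*(f*(t*f)))) - φ•(e*(c*(f*(t*f)))) -
                  (θ•(e*(t*(e*(c*f)))) - φ•(e*(t*(e*(c*f))))) =
                (θ•(e*(c*(f*(t*f)))) + φ•(e*(t*(e*(c*f))))) -
                  (θ•(e*(t*(e*(c*f)))) + φ•(e*(c*(f*(t*f))))) := by abel
              _ = (θ•(e*(c*r)) + φ•(p*(c*f))) - (θ•(p*(c*f)) + φ•(e*(c*r))) := by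
                  rw [h1, h2]
              _ = θ•(e*(c*r)) - φ•(e*(c*r)) - (θ•(p*(c*f)) - φ•(p*(c*f))) := by abel
          have hsum3 := cA (θ+φ) (by rw [hθφ]; exact hsum) _ _ hsum2
          have hdiff3 := cA (θ-φ) (sub_ne_zero.mpr hcase) _ _ hdiff
          constructor
          · have h2x : e*(c*(f*(t*f))) + e*(c*(f*(t*f))) = e*(c*r) + e*(c*r) := by
              calc e*(c*(f*(t*f))) + e*(c*(f*(t*f))) =
                  (e*(c*(f*(t*f))) + e*(t*(e*(c*f)))) +
                  (e*(c*(f*(t*f))) - e*(t*(e*(c*f)))) := by abel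
                _ = (e*(c*r) + p*(c*f)) + (e*(c*r) - p*(c*f)) := by rw [hsum3, hdiff3]
                _ = e*(c*r) + e*(c*r) := by abel
            have : (2:ℂ)•(e*(c*(f*(t*f)))) = (2:ℂ)•(e*(c*r)) := by
              rw [two_smul, two_smul]; exact h2x
            exact cA 2 two_ne_zero _ _ this
          · have h2y : e*(t*(e*(c*f))) + e*(t*(e*(c*f))) = p*(c*f) + p*(c*f) := by
              calc e*(t*(e*(c*f))) + e*(t*(e*(c*f))) =
                  (e*(c*(f*(t*f))) + e*(t*(e*(c*f)))) -
                  (e*(c*(f*(t*f))) - e*(t*(e*(c*f)))) := by abel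
                _ = (e*(c*r) + p*(c*f)) - (e*(c*r) - p*(c*f)) := by rw [hsum3, hdiff3]
                _ = p*(c*f) + p*(c*f) := by abel
            have : (2:ℂ)•(e*(t*(e*(c*f)))) = (2:ℂ)•(p*(c*f)) := by
              rw [two_smul, two_smul]; exact h2y
            exact cA 2 two_ne_zero _ _ this
        constructor
        · have key : ∀ c : A, (e*(t*e) - p) * c * f = 0 := by
            intro c
            have hy := (main c).2
            rw [show (e*(t*e) - p)*c*f = e*(t*(e*(c*f))) - p*(c*f) by
              simp only [sub_mul, mul_assoc], hy, sub_self]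
          exact sub_eq_zero.mp (prime_rf _ key)
        · have key : ∀ c : A, e * c * (f*(t*f) - r) = 0 := by
            intro c
            have hx := (main c).1
            rw [show e*c*(f*(t*f) - r) = e*(c*(f*(t*f))) - e*(c*r) by
              simp only [mul_sub, mul_assoc], hx, sub_self]
          exact sub_eq_zero.mp (prime_le _ key)
    obtain ⟨h11, h22⟩ := hdiag
    rw [hdecomp t, h11, h12, h21, h22]
    abel
  -- full Peirce splitting
  have split : ∀ x : A, Φ x = Φ (e*x*e) + Φ (e*x*f) + Φ (f*x*e) + Φ (f*x*f) := by
    intro x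
    have hx4 : x = e*x*e + e*x*f + f*x*f + f*x*e := by rw [hfdef]; noncomm_ring
    have h4 := t4 (e*x*e) (e*x*f) (f*x*f) (f*x*e)
      (by simp only [mul_assoc, liftL hee, hee])
      (by simp only [mul_assoc, liftL hee, hff])
      (by simp only [mul_assoc, liftL hff, hff])
      (by simp only [mul_assoc, liftL hff, hee])
    have h3 := t3 (e*x*e) (e*x*f) (f*x*f)
      (by simp only [mul_assoc, liftL hee, hee])
      (by simp only [mul_assoc, liftL hee, hff])
      (by simp only [mul_assoc, liftL hff, hff])
    calc Φ x = Φ (e*x*e + e*x*f + f*x*f + f*x*e) := by rw [← hx4]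
      _ = Φ (e*x*e + e*x*f + f*x*f) + Φ (f*x*e) := h4
      _ = Φ (e*x*e) + Φ (e*x*f) + Φ (f*x*f) + Φ (f*x*e) := by rw [h3]
      _ = Φ (e*x*e) + Φ (e*x*f) + Φ (f*x*e) + Φ (f*x*f) := by abel
  -- full additivity
  have addfull : ∀ a b : A, Φ (a + b) = Φ a + Φ b := by
    intro a b
    rw [split (a+b), split a, split b]
    rw [show e*(a+b)*e = e*a*e + e*b*e by noncomm_ring,
        show e*(a+b)*f = e*a*f + e*b*f by noncomm_ring,
        show f*(a+b)*e = f*a*e + f*b*e by noncomm_ring,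
        show f*(a+b)*f = f*a*f + f*b*f by noncomm_ring]
    rw [a11add _ _ (by simp only [mul_assoc, liftL hee, hee])
          (by simp only [mul_assoc, liftL hee, hee]),
        a12add _ _ (by simp only [mul_assoc, liftL hee, hff])
          (by simp only [mul_assoc, liftL hee, hff]),
        a21add _ _ (by simp only [mul_assoc, liftL hff, hee])
          (by simp only [mul_assoc, liftL hff, hee]),
        a22add _ _ (by simp only [mul_assoc, liftL hff, hff])
          (by simp only [mul_assoc, liftL hff, hff])]
    abel
  -- the Jordan property
  have jordan : ∀ a c : A, Φ (a*c + c*a) = Φ a * Φ c + Φ c * Φ a := by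
    intro a c
    have hsumEq : Φ ((θ•(a*c) + φ•(c*a)) + (θ•(c*a) + φ•(a*c))) =
        θ•(Φ a*Φ c) + φ•(Φ c*Φ a) + (θ•(Φ c*Φ a) + φ•(Φ a*Φ c)) := by
      rw [addfull, hP a c, hP c a]
    rw [show (θ•(a*c) + φ•(c*a)) + (θ•(c*a) + φ•(a*c)) = S•(a*c + c*a) by
      rw [← hθφ]; module] at hsumEq
    rw [show θ•(Φ a*Φ c) + φ•(Φ c*Φ a) + (θ•(Φ c*Φ a) + φ•(Φ a*Φ c)) =
        S•(Φ a*Φ c + Φ c*Φ a) by rw [← hθφ]; module] at hsumEq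
    rw [homog] at hsumEq
    exact cB S hsum _ _ hsumEq
  exact ⟨jordan, addfull, hstar⟩
end
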